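/- arXiv:1804.01504 — 5 statements merged into one kernel-verified Lean document; each statement's English description precedes it below -/
import Mathlib

section
/- Fix n ≥ 2 and m = n(n−1)/2. For every pair of subsets I, J ⊆ {1,…,n} with |I| = |J|, there exists a polynomial P_{I,J} in n+m variables with nonnegative integer coefficients such that for all x ∈ ℂ^n and z ∈ ℂ^m, det((az_0(x,z))_{I,J}) = P_{I,J}(x_1,…,x_n,z_1,…,z_m). In particular, every such minor is nonnegative whenever all x_j and z_j are positive reals. -/
open Matrix Finset Filter

noncomputable section

/-- Bottom-right `k × k` principal submatrix of an `n × n` matrix. -/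
def corner (n k : ℕ) (hk : k ≤ n) (X : Matrix (Fin n) (Fin n) ℂ) :
    Matrix (Fin k) (Fin k) ℂ :=
  Matrix.of fun i j =>
    X ⟨n - k + i.val, by have := i.isLt; omega⟩ ⟨n - k + j.val, by have := j.isLt; omega⟩

theorem corner_isHermitian {n k : ℕ} (hk : k ≤ n) {A : Matrix (Fin n) (Fin n) ℂ}
    (hA : A.IsHermitian) : (corner n k hk A).IsHermitian := by
  ext i j
  simpa [corner, Matrix.conjTranspose_apply] using hA.apply _ _

/-- The eigenvalues of a Hermitian matrix, with multiplicity, sorted in decreasing order: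
`sortedEig hB i.rev` is increasing in `i`, so `sortedEig hB 0` is the largest eigenvalue. -/
def sortedEig {k : ℕ} {B : Matrix (Fin k) (Fin k) ℂ} (hB : B.IsHermitian) : Fin k → ℝ :=
  fun i => hB.eigenvalues (Tuple.sort hB.eigenvalues i.rev)

open scoped Classical in
/-- The Gelfand–Zeitlin function `λ_i^{(k)}(A)` (`1 ≤ i ≤ k ≤ n`, one-based indexing):
the `i`-th largest eigenvalue (with multiplicity) of the bottom-right `k × k`
principal submatrix of `A`.  Junk value `0` outside the valid index range or if `A`
is not Hermitian. -/
def GZ (n : ℕ) (A : Matrix (Fin n) (Fin n) ℂ) (k i : ℕ) : ℝ :=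
  if h : A.IsHermitian ∧ 1 ≤ i ∧ i ≤ k ∧ k ≤ n then
    sortedEig (corner_isHermitian h.2.2.2 h.1) ⟨i - 1, by omega⟩
  else 0

/-- `ℓ_i^{(k)}(A) = λ_1^{(k)}(A) + ⋯ + λ_i^{(k)}(A)`; in particular `ellGZ n A k 0 = 0`. -/
def ellGZ (n : ℕ) (A : Matrix (Fin n) (Fin n) ℂ) (k i : ℕ) : ℝ :=
  ∑ j ∈ Finset.Icc 1 i, GZ n A k j

/-- The set `AN` of upper triangular complex matrices with positive real diagonal entries. -/
def AN (n : ℕ) : Set (Matrix (Fin n) (Fin n) ℂ) :=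
  {b | (∀ i j : Fin n, j < i → b i j = 0) ∧ ∀ i : Fin n, 0 < (b i i).re ∧ (b i i).im = 0}

/-- The corner minor `Δ_i^{(k)}(b)`: determinant of the `i × i` submatrix with
(one-based) rows `n-k+1, …, n-k+i` and columns `n-i+1, …, n`.  Junk value `0`
outside the valid index range. -/
def cornerMinor (n k i : ℕ) (b : Matrix (Fin n) (Fin n) ℂ) : ℂ :=
  if h : 1 ≤ i ∧ i ≤ k ∧ k ≤ n then
    Matrix.det (Matrix.of fun p q : Fin i =>
      b ⟨n - k + p.val, by have := p.isLt; omega⟩ ⟨n - i + q.val, by have := q.isLt; omega⟩)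
  else 0

open scoped Classical in
/-- The minor `det (b_{I,J})` with rows `I` and columns `J` (taken in increasing order);
junk value `0` if `I.card ≠ J.card`. -/
def subMinor {n : ℕ} (b : Matrix (Fin n) (Fin n) ℂ) (I J : Finset (Fin n)) : ℂ :=
  if h : I.card = J.card then
    Matrix.det (Matrix.of fun p q : Fin I.card =>
      b ((I.orderIsoOfFin rfl) p) ((J.orderIsoOfFin h.symm) q))
  else 0

/-- A triangular array `L k i = ℓ_i^{(k)}` (the convention `ℓ_0^{(k)} = 0` is to be built
into `L`) lies in `C^δ`: the rhombus inequalities hold with margin `δ`. -/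
def inCdelta (n : ℕ) (δ : ℝ) (L : ℕ → ℕ → ℝ) : Prop :=
  ∀ i k : ℕ, 1 ≤ i → i ≤ k → k < n →
    L (k+1) i + L k (i-1) > L (k+1) (i-1) + L k i + δ ∧
    L (k+1) i + L k i > L (k+1) (i+1) + L k (i-1) + δ

/-- `e_j(z) = I + z·E_{j,j+1}` (one-based `j`): the entry in (one-based) row `j`,
column `j+1` equals `z`. -/
def ejmat (n : ℕ) (j : ℕ) (z : ℂ) : Matrix (Fin n) (Fin n) ℂ :=
  1 + Matrix.of (fun p q : Fin n => if p.val + 1 = j ∧ q.val + 1 = j + 1 then z else 0)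

/-- The standard reduced word `i_0 = (1,…,n−1, 1,…,n−2, …, 1,2, 1)` of length `n(n-1)/2`. -/
def word (n : ℕ) : List ℕ :=
  ((List.range (n-1)).reverse).flatMap (fun r => (List.range (r+1)).map (· + 1))

/-- `az_0(x,z) = diag(x_1,…,x_n)·e_{i_1}(z_1)⋯e_{i_m}(z_m)` (one-based `x`, `z`),
where `(i_1,…,i_m)` is the standard reduced word. -/
def az0 (n : ℕ) (x z : ℕ → ℂ) : Matrix (Fin n) (Fin n) ℂ :=
  Matrix.diagonal (fun p : Fin n => x (p.val + 1)) *
    ((word n).zipIdx.map (fun q => ejmat n q.1 (z (q.2 + 1)))).prod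

/-- The (one-based) rows `n-k+1, …, n` as a finset of `Fin n`. -/
def rowsFrom (n k : ℕ) : Finset (Fin n) :=
  Finset.univ.filter (fun p : Fin n => n - k ≤ p.val)

/-- `Σ |det(B_{I,J})|²`, the sum over all `I, J ⊆ {n−k+1,…,n}` with `|I| = |J| = i`. -/
def GZsum (n k i : ℕ) (B : Matrix (Fin n) (Fin n) ℂ) : ℝ :=
  ∑ I ∈ Finset.powersetCard i (rowsFrom n k), ∑ J ∈ Finset.powersetCard i (rowsFrom n k),
    ‖subMinor B I J‖ ^ 2

/-- `B_t(w) = az_0((e^{t w_1},…,e^{t w_n}), (e^{t w_{n+1}},…,e^{t w_{n+m}}))`. -/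
def Bt (n : ℕ) (w : ℕ → ℝ) (t : ℝ) : Matrix (Fin n) (Fin n) ℂ :=
  az0 n (fun j => (Real.exp (t * w j) : ℂ)) (fun j => (Real.exp (t * w (n + j)) : ℂ))

/-- `B_t(w,φ) = az_0((e^{t w_1},…,e^{t w_n}), (e^{t w_{n+1} + √−1 φ_1},…,e^{t w_{n+m} + √−1 φ_m}))`. -/
def Btphase (n : ℕ) (w φ : ℕ → ℝ) (t : ℝ) : Matrix (Fin n) (Fin n) ℂ :=
  az0 n (fun j => (Real.exp (t * w j) : ℂ))
    (fun j => Complex.exp ((t * w (n + j) : ℝ) + (φ j : ℂ) * Complex.I))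


namespace S9

variable {R S : Type*} [CommRing R] [CommRing S] {n : ℕ}

/-- generic version of `ejmat` over any commutative ring -/
def ejR (n : ℕ) (j : ℕ) (z : R) : Matrix (Fin n) (Fin n) R :=
  1 + Matrix.of (fun p q : Fin n => if p.val + 1 = j ∧ q.val + 1 = j + 1 then z else 0)

open scoped Classical in
/-- generic version of `subMinor` over any commutative ring -/
def gminor (M : Matrix (Fin n) (Fin n) R) (I J : Finset (Fin n)) : R :=
  if h : I.card = J.card then
    Matrix.det (Matrix.of fun p q : Fin I.card =>
      M ((I.orderIsoOfFin rfl) p) ((J.orderIsoOfFin h.symm) q))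
  else 0

theorem subMinor_eq_gminor {n : ℕ} (b : Matrix (Fin n) (Fin n) ℂ) (I J : Finset (Fin n)) :
    subMinor b I J = gminor b I J := rfl

theorem ejmat_eq_ejR (n j : ℕ) (z : ℂ) : ejmat n j z = ejR n j z := rfl

theorem mul_ejR_apply (M : Matrix (Fin n) (Fin n) R) {j : ℕ} (hj1 : 1 ≤ j) (hj2 : j < n)
    (z : R) (p q : Fin n) :
    (M * ejR n j z) p q =
      M p q + if q.val = j then z * M p ⟨j - 1, by omega⟩ else 0 := by
  set a : Fin n := ⟨j - 1, by omega⟩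
  have : (M * Matrix.of (fun p q : Fin n =>
      if p.val + 1 = j ∧ q.val + 1 = j + 1 then z else 0)) p q =
      if q.val = j then z * M p a else 0 := by
    rw [Matrix.mul_apply]
    rcases eq_or_ne q.val j with hq | hq
    · rw [Finset.sum_eq_single a]
      · simp [Matrix.of_apply, a, hq, mul_comm, Nat.sub_add_cancel hj1]
      · intro b _ hb
        have : ¬ (b.val + 1 = j) := by
          intro h; apply hb; apply Fin.ext; simp [a]; omega
        simp [Matrix.of_apply, this]
      · simp
    · rw [if_neg hq]
      apply Finset.sum_eq_zero
      intro b _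
      have h2 : ¬ (b.val + 1 = j ∧ q.val + 1 = j + 1) := by omega
      simp only [Matrix.of_apply]
      rw [if_neg h2, mul_zero]
  rw [ejR, Matrix.mul_add, Matrix.mul_one, Matrix.add_apply, this]

theorem gminor_case1 (M : Matrix (Fin n) (Fin n) R) {j : ℕ} (hj1 : 1 ≤ j) (hj2 : j < n)
    (z : R) (I J : Finset (Fin n)) (h : I.card = J.card) (hb : (⟨j, hj2⟩ : Fin n) ∉ J) :
    gminor (M * ejR n j z) I J = gminor M I J := by
  classical
  rw [gminor, gminor, dif_pos h, dif_pos h]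
  congr 1
  ext p q
  have hne : ((J.orderIsoOfFin h.symm q : Fin n)).val ≠ j := by
    intro hv
    apply hb
    have : (J.orderIsoOfFin h.symm q : Fin n) = ⟨j, hj2⟩ := Fin.ext hv
    rw [← this]; exact (J.orderIsoOfFin h.symm q).2
  simp only [Matrix.of_apply]
  rw [mul_ejR_apply M hj1 hj2, if_neg hne, add_zero]

theorem gminor_case2 (M : Matrix (Fin n) (Fin n) R) {j : ℕ} (hj1 : 1 ≤ j) (hj2 : j < n)
    (z : R) (I J : Finset (Fin n)) (h : I.card = J.card) (hb : (⟨j, hj2⟩ : Fin n) ∈ J)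
    (ha : (⟨j - 1, by omega⟩ : Fin n) ∈ J) :
    gminor (M * ejR n j z) I J = gminor M I J := by
  classical
  set b : Fin n := ⟨j, hj2⟩
  set a : Fin n := ⟨j - 1, by omega⟩
  set N : Matrix (Fin I.card) (Fin I.card) R := Matrix.of fun p q =>
    M ((I.orderIsoOfFin rfl) p) ((J.orderIsoOfFin h.symm) q) with hN
  set u : Fin I.card → R := fun p => M ((I.orderIsoOfFin rfl) p) a with hu
  set qb : Fin I.card := (J.orderIsoOfFin h.symm).symm ⟨b, hb⟩ with hqb
  have hJb : (J.orderIsoOfFin h.symm qb : Fin n) = b := by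
    rw [hqb, OrderIso.apply_symm_apply]
  have key : (Matrix.of fun p q : Fin I.card =>
      (M * ejR n j z) ((I.orderIsoOfFin rfl) p) ((J.orderIsoOfFin h.symm) q)) =
      N.updateCol qb ((fun p => N p qb) + z • u) := by
    ext p q
    by_cases hq : q = qb
    · subst hq
      rw [Matrix.updateCol_self]
      simp only [Matrix.of_apply, mul_ejR_apply M hj1 hj2, Pi.add_apply, Pi.smul_apply,
        smul_eq_mul, hN, Matrix.of_apply]
      rw [if_pos (by rw [hJb])]
    · rw [Matrix.updateCol_ne hq]
      simp only [Matrix.of_apply, mul_ejR_apply M hj1 hj2, hN]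
      rw [if_neg, add_zero]
      intro hv
      apply hq
      have hEq : ((J.orderIsoOfFin h.symm q : Fin n)) = b := Fin.ext hv
      exact (J.orderIsoOfFin h.symm).injective (Subtype.ext (hEq.trans hJb.symm))
  rw [gminor, gminor, dif_pos h, dif_pos h, key,
    Matrix.det_updateCol_add, Matrix.det_updateCol_smul, Matrix.updateCol_eq_self]
  have hzero : (N.updateCol qb u).det = 0 := by
    set qa : Fin I.card := (J.orderIsoOfFin h.symm).symm ⟨a, ha⟩ with hqa
    have hJa : (J.orderIsoOfFin h.symm qa : Fin n) = a := by
      rw [hqa, OrderIso.apply_symm_apply]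
    have hne : qa ≠ qb := by
      intro hE
      have : a = b := by rw [← hJa, hE, hJb]
      have : j - 1 = j := congrArg Fin.val this
      omega
    apply Matrix.det_zero_of_column_eq hne
    intro k
    rw [Matrix.updateCol_ne hne, Matrix.updateCol_self]
    simp only [hN, hu, Matrix.of_apply, ← Finset.coe_orderIsoOfFin_apply, hJa]
  rw [hzero, mul_zero, add_zero]

theorem gminor_case3 (M : Matrix (Fin n) (Fin n) R) {j : ℕ} (hj1 : 1 ≤ j) (hj2 : j < n)
    (z : R) (I J : Finset (Fin n)) (h : I.card = J.card)
    (hb : (⟨j, hj2⟩ : Fin n) ∈ J) (ha : (⟨j - 1, by omega⟩ : Fin n) ∉ J) :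
    gminor (M * ejR n j z) I J =
      gminor M I J +
        z * gminor M I (insert (⟨j - 1, by omega⟩ : Fin n)
          (J.erase (⟨j, hj2⟩ : Fin n))) := by
  classical
  set b : Fin n := ⟨j, hj2⟩
  set a : Fin n := ⟨j - 1, by omega⟩ with hadef
  set J' : Finset (Fin n) := insert a (J.erase b) with hJ'
  have hab : a ≠ b := by intro hE; have := congrArg Fin.val hE; simp [hadef, b] at this; omega
  have hcard' : J'.card = J.card := by
    rw [hJ', Finset.card_insert_of_notMem (fun hmem => ha (Finset.mem_of_mem_erase hmem)),
      Finset.card_erase_of_mem hb]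
    have : 0 < J.card := Finset.card_pos.mpr ⟨b, hb⟩
    omega
  have h' : I.card = J'.card := h.trans hcard'.symm
  set N : Matrix (Fin I.card) (Fin I.card) R := Matrix.of fun p q =>
    M ((I.orderIsoOfFin rfl) p) ((J.orderIsoOfFin h.symm) q) with hN
  set u : Fin I.card → R := fun p => M ((I.orderIsoOfFin rfl) p) a with hu
  set qb : Fin I.card := (J.orderIsoOfFin h.symm).symm ⟨b, hb⟩ with hqb
  have hJb : (J.orderIsoOfFin h.symm qb : Fin n) = b := by
    rw [hqb, OrderIso.apply_symm_apply]
  -- the modified submatrix as updateColumn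
  have key : (Matrix.of fun p q : Fin I.card =>
      (M * ejR n j z) ((I.orderIsoOfFin rfl) p) ((J.orderIsoOfFin h.symm) q)) =
      N.updateCol qb ((fun p => N p qb) + z • u) := by
    ext p q
    by_cases hq : q = qb
    · subst hq
      rw [Matrix.updateCol_self]
      simp only [Matrix.of_apply, mul_ejR_apply M hj1 hj2, Pi.add_apply, Pi.smul_apply,
        smul_eq_mul, hN, Matrix.of_apply]
      rw [if_pos (by rw [hJb])]
    · rw [Matrix.updateCol_ne hq]
      simp only [Matrix.of_apply, mul_ejR_apply M hj1 hj2, hN]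
      rw [if_neg, add_zero]
      intro hv
      apply hq
      have hEq : ((J.orderIsoOfFin h.symm q : Fin n)) = b := Fin.ext hv
      exact (J.orderIsoOfFin h.symm).injective (Subtype.ext (hEq.trans hJb.symm))
  -- the order iso of J'
  have hgm : ∀ q : Fin I.card, (J'.orderEmbOfFin h'.symm q : Fin n) =
      if q = qb then a else (J.orderIsoOfFin h.symm q : Fin n) := by
    have hmem : ∀ q : Fin I.card,
        (if q = qb then a else (J.orderIsoOfFin h.symm q : Fin n)) ∈ J' := by
      intro q
      by_cases hq : q = qb
      · simp [hq, hJ']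
      · rw [if_neg hq, hJ']
        apply Finset.mem_insert_of_mem
        apply Finset.mem_erase_of_ne_of_mem
        · intro hE
          exact hq ((J.orderIsoOfFin h.symm).injective (Subtype.ext (hE.trans hJb.symm)))
        · exact (J.orderIsoOfFin h.symm q).2
    have hlt_b : ∀ q : Fin I.card, q < qb → (J.orderIsoOfFin h.symm q : Fin n) < a := by
      intro q hq
      have h1 : (J.orderIsoOfFin h.symm q : Fin n) < b := by
        rw [← hJb]
        exact_mod_cast (J.orderIsoOfFin h.symm).strictMono hq
      have h2 : (J.orderIsoOfFin h.symm q : Fin n) ≠ a := by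
        intro hE; apply ha; rw [← hE]; exact (J.orderIsoOfFin h.symm q).2
      have hv1 : ((J.orderIsoOfFin h.symm q : Fin n)).val < j := h1
      have hv2 : ((J.orderIsoOfFin h.symm q : Fin n)).val ≠ j - 1 := by
        intro hE; exact h2 (Fin.ext hE)
      have hav : (a : Fin n).val = j - 1 := rfl
      rw [Fin.lt_def, hav]
      omega
    have hgt_b : ∀ q : Fin I.card, qb < q → b < (J.orderIsoOfFin h.symm q : Fin n) := by
      intro q hq
      rw [← hJb]
      exact_mod_cast (J.orderIsoOfFin h.symm).strictMono hq
    have haltb : a < b := by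
      rw [Fin.lt_def]
      show j - 1 < j
      omega
    have hmono : StrictMono (fun q : Fin I.card =>
        if q = qb then a else (J.orderIsoOfFin h.symm q : Fin n)) := by
      intro p q hpq
      simp only []
      by_cases hq : q = qb
      · subst hq
        rw [if_pos rfl]
        by_cases hp : p = qb
        · exact absurd (hp ▸ hpq) (lt_irrefl _)
        · rw [if_neg hp]
          exact hlt_b p hpq
      · rw [if_neg hq]
        by_cases hp : p = qb
        · subst hp
          rw [if_pos rfl]
          exact lt_trans haltb (hgt_b q hpq)
        · rw [if_neg hp]
          exact_mod_cast (J.orderIsoOfFin h.symm).strictMono hpq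
    have hU := Finset.orderEmbOfFin_unique h'.symm hmem hmono
    intro q
    exact congrFun hU.symm q
  -- second determinant equals minor at J'
  have hsecond : (N.updateCol qb u) = Matrix.of (fun p q : Fin I.card =>
      M ((I.orderIsoOfFin rfl) p) ((J'.orderIsoOfFin h'.symm) q)) := by
    ext p q
    simp only [Matrix.of_apply, Finset.coe_orderIsoOfFin_apply]
    rw [hgm q]
    by_cases hq : q = qb
    · subst hq
      rw [Matrix.updateCol_self, if_pos rfl, hu]
      simp [Finset.coe_orderIsoOfFin_apply]
    · rw [Matrix.updateCol_ne hq, if_neg hq, hN, Matrix.of_apply,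
        Finset.coe_orderIsoOfFin_apply]
  rw [gminor, gminor, gminor, dif_pos h, dif_pos h, dif_pos h', key,
    Matrix.det_updateCol_add, Matrix.det_updateCol_smul, Matrix.updateCol_eq_self,
    hsecond]

-- diagonal base cases
theorem gminor_diagonal_ne (d : Fin n → R) (I J : Finset (Fin n)) (hne : I ≠ J) :
    gminor (Matrix.diagonal d) I J = 0 := by
  classical
  rw [gminor]
  by_cases h : I.card = J.card
  swap
  · rw [dif_neg h]
  rw [dif_pos h]
  have hJI : ¬ J ⊆ I := by
    intro hsub
    exact hne (Finset.eq_of_subset_of_card_le hsub (le_of_eq h)).symm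
  obtain ⟨b, hbJ, hbI⟩ := Finset.not_subset.mp hJI
  set qb : Fin I.card := (J.orderIsoOfFin h.symm).symm ⟨b, hbJ⟩ with hqb
  have hJb : (J.orderIsoOfFin h.symm qb : Fin n) = b := by
    rw [hqb, OrderIso.apply_symm_apply]
  apply Matrix.det_eq_zero_of_column_eq_zero qb
  intro p
  rw [Matrix.of_apply, hJb]
  apply Matrix.diagonal_apply_ne
  intro hE
  apply hbI
  rw [← hE]
  exact ((I.orderIsoOfFin rfl) p).2

theorem gminor_diagonal_self (d : Fin n → R) (I : Finset (Fin n)) :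
    gminor (Matrix.diagonal d) I I =
      ∏ q : Fin I.card, d ((I.orderIsoOfFin rfl) q) := by
  classical
  rw [gminor, dif_pos rfl]
  have : (Matrix.of fun p q : Fin I.card =>
      (Matrix.diagonal d) ((I.orderIsoOfFin rfl) p) ((I.orderIsoOfFin rfl) q)) =
      Matrix.diagonal (fun q : Fin I.card => d ((I.orderIsoOfFin rfl) q)) := by
    ext p q
    by_cases hpq : p = q
    · subst hpq; simp [Matrix.diagonal_apply_eq]
    · rw [Matrix.of_apply, Matrix.diagonal_apply_ne _ hpq, Matrix.diagonal_apply_ne]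
      intro hE
      exact hpq ((I.orderIsoOfFin rfl).injective (Subtype.ext hE))
  rw [this, Matrix.det_diagonal]

-- IsNatPoly
def IsNatPoly {σ : Type*} (p : MvPolynomial σ ℤ) : Prop :=
  ∃ q : MvPolynomial σ ℕ, MvPolynomial.map (Nat.castRingHom ℤ) q = p

theorem IsNatPoly.zero {σ : Type*} : IsNatPoly (0 : MvPolynomial σ ℤ) := ⟨0, map_zero _⟩

theorem IsNatPoly.one {σ : Type*} : IsNatPoly (1 : MvPolynomial σ ℤ) := ⟨1, map_one _⟩

theorem IsNatPoly.X {σ : Type*} (i : σ) : IsNatPoly (MvPolynomial.X i : MvPolynomial σ ℤ) :=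
  ⟨MvPolynomial.X i, MvPolynomial.map_X _ _⟩

theorem IsNatPoly.add {σ : Type*} {p q : MvPolynomial σ ℤ} (hp : IsNatPoly p)
    (hq : IsNatPoly q) : IsNatPoly (p + q) := by
  obtain ⟨p', rfl⟩ := hp; obtain ⟨q', rfl⟩ := hq
  exact ⟨p' + q', map_add _ _ _⟩

theorem IsNatPoly.mul {σ : Type*} {p q : MvPolynomial σ ℤ} (hp : IsNatPoly p)
    (hq : IsNatPoly q) : IsNatPoly (p * q) := by
  obtain ⟨p', rfl⟩ := hp; obtain ⟨q', rfl⟩ := hq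
  exact ⟨p' * q', map_mul _ _ _⟩

theorem IsNatPoly.prod {σ ι : Type*} [Fintype ι] (f : ι → MvPolynomial σ ℤ)
    (hf : ∀ i, IsNatPoly (f i)) : IsNatPoly (∏ i, f i) := by
  classical
  apply Finset.prod_induction _ IsNatPoly (fun _ _ => IsNatPoly.mul) IsNatPoly.one
  intro i _
  exact hf i

-- induction
section poly
variable {σ : Type*}

theorem natPoly_step (M : Matrix (Fin n) (Fin n) (MvPolynomial σ ℤ))
    (hM : ∀ I J, IsNatPoly (gminor M I J)) {j : ℕ} (hj1 : 1 ≤ j) (hj2 : j < n)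
    {z : MvPolynomial σ ℤ} (hz : IsNatPoly z) :
    ∀ I J, IsNatPoly (gminor (M * ejR n j z) I J) := by
  intro I J
  by_cases h : I.card = J.card
  · by_cases hbJ : (⟨j, hj2⟩ : Fin n) ∈ J
    · by_cases haJ : (⟨j - 1, by omega⟩ : Fin n) ∈ J
      · rw [gminor_case2 M hj1 hj2 z I J h hbJ haJ]; exact hM I J
      · rw [gminor_case3 M hj1 hj2 z I J h hbJ haJ]
        exact (hM I J).add (hz.mul (hM I _))
    · rw [gminor_case1 M hj1 hj2 z I J h hbJ]; exact hM I J
  · rw [gminor, dif_neg h]; exact IsNatPoly.zero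

theorem natPoly_list (L : List (Matrix (Fin n) (Fin n) (MvPolynomial σ ℤ)))
    (hL : ∀ A ∈ L, ∃ j z, 1 ≤ j ∧ ∃ hj2 : j < n, IsNatPoly z ∧ A = ejR n j z) :
    ∀ M : Matrix (Fin n) (Fin n) (MvPolynomial σ ℤ),
      (∀ I J, IsNatPoly (gminor M I J)) → ∀ I J, IsNatPoly (gminor (M * L.prod) I J) := by
  induction L with
  | nil => intro M hM I J; rw [List.prod_nil, mul_one]; exact hM I J
  | cons A L ih =>
    intro M hM I J
    rw [List.prod_cons, ← mul_assoc]
    apply ih (fun B hB => hL B (List.mem_cons_of_mem A hB))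
    obtain ⟨j, z, hj1, hj2, hz, rfl⟩ := hL A List.mem_cons_self
    exact natPoly_step M hM hj1 hj2 hz

end poly

theorem length_word (n : ℕ) : (word n).length * 2 = (n - 1) * n := by
  have key : ∀ k : ℕ,
      (((List.range k).reverse).flatMap
        (fun r => (List.range (r+1)).map (· + 1))).length * 2 = k * (k + 1) := by
    intro k
    induction k with
    | zero => simp
    | succ k ih =>
      rw [List.range_succ, List.reverse_append, List.reverse_singleton,
        List.singleton_append, List.flatMap_cons, List.length_append]
      simp only [List.length_map, List.length_range]
      calc ((k + 1) + (((List.range k).reverse).flatMap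
            (fun r => (List.range (r+1)).map (· + 1))).length) * 2
          = (k+1)*2 + (((List.range k).reverse).flatMap
            (fun r => (List.range (r+1)).map (· + 1))).length * 2 := by ring
        _ = (k+1)*2 + k*(k+1) := by rw [ih]
        _ = (k+1)*(k+1+1) := by ring
  have := key (n - 1)
  rcases Nat.eq_zero_or_pos n with rfl | hn
  · simpa [word] using (by simpa using key 0)
  · rw [word, this]
    have : n - 1 + 1 = n := by omega
    rw [this]

theorem mem_word {n j : ℕ} (hj : j ∈ word n) : 1 ≤ j ∧ j < n := by
  rw [word, List.mem_flatMap] at hj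
  obtain ⟨r, hr, hj⟩ := hj
  rw [List.mem_reverse, List.mem_range] at hr
  rw [List.mem_map] at hj
  obtain ⟨s, hs, rfl⟩ := hj
  rw [List.mem_range] at hs
  omega

theorem gminor_map (φ : R →+* S) (M : Matrix (Fin n) (Fin n) R) (I J : Finset (Fin n)) :
    gminor (M.map φ) I J = φ (gminor M I J) := by
  classical
  rw [gminor, gminor]
  by_cases h : I.card = J.card
  · rw [dif_pos h, dif_pos h, RingHom.map_det]
    congr 1
  · rw [dif_neg h, dif_neg h, map_zero]

-- the universal matrix
def vz (n m t : ℕ) : MvPolynomial (Fin (n + m)) ℤ :=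
  if h : t < m then MvPolynomial.X ⟨n + t, by omega⟩ else 0

def AZ (n m : ℕ) : Matrix (Fin n) (Fin n) (MvPolynomial (Fin (n + m)) ℤ) :=
  Matrix.diagonal (fun p : Fin n => MvPolynomial.X ⟨p.val, by omega⟩) *
    ((word n).zipIdx.map (fun q => ejR n q.1 (vz n m q.2))).prod

theorem AZ_natPoly (n m : ℕ) (I J : Finset (Fin n)) : IsNatPoly (gminor (AZ n m) I J) := by
  classical
  apply natPoly_list
  · intro A hA
    rw [List.mem_map] at hA
    obtain ⟨q, hq, rfl⟩ := hA
    have hmem : q.1 ∈ word n := List.fst_mem_of_mem_zipIdx hq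
    obtain ⟨h1, h2⟩ := mem_word hmem
    refine ⟨q.1, vz n m q.2, h1, h2, ?_, rfl⟩
    rw [vz]
    split
    · exact IsNatPoly.X _
    · exact IsNatPoly.zero
  · intro I J
    by_cases hIJ : I = J
    · subst hIJ
      rw [gminor_diagonal_self]
      exact IsNatPoly.prod _ (fun i => IsNatPoly.X _)
    · rw [gminor_diagonal_ne _ _ _ hIJ]
      exact IsNatPoly.zero

-- specialization
theorem AZ_map (n m : ℕ) (hm : (word n).length = m) (x z : ℕ → ℂ)
    (f : Fin (n + m) → ℂ)
    (hf : ∀ j : Fin (n + m), f j = if j.val < n then x (j.val + 1) else z (j.val - n + 1)) :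
    (AZ n m).map ((MvPolynomial.aeval f : MvPolynomial (Fin (n + m)) ℤ →ₐ[ℤ] ℂ).toRingHom :
        MvPolynomial (Fin (n + m)) ℤ →+* ℂ) =
      az0 n x z := by
  set φ : MvPolynomial (Fin (n + m)) ℤ →+* ℂ :=
    (MvPolynomial.aeval f : MvPolynomial (Fin (n + m)) ℤ →ₐ[ℤ] ℂ).toRingHom with hφ
  show φ.mapMatrix (AZ n m) = az0 n x z
  rw [AZ, az0, _root_.map_mul]
  congr 1
  · rw [RingHom.mapMatrix_apply]
    rw [Matrix.diagonal_map (map_zero φ)]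
    apply congrArg
    funext p
    erw [MvPolynomial.aeval_X]
    rw [hf]
    simp [p.isLt]
  · rw [map_list_prod φ.mapMatrix, List.map_map]
    congr 1
    apply List.map_congr_left
    intro q hq
    have hlt : q.2 < m := by
      have := List.snd_lt_of_mem_zipIdx hq
      simpa [hm] using this
    have hvz : φ (vz n m q.2) = z (q.2 + 1) := by
      rw [vz, dif_pos hlt]
      have : φ (MvPolynomial.X ⟨n + q.2, by omega⟩) = f ⟨n + q.2, by omega⟩ :=
        MvPolynomial.aeval_X f _
      rw [this, hf]
      simp
    show φ.mapMatrix _ = _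
    rw [RingHom.mapMatrix_apply]
    ext p r
    simp only [ejR, ejmat, Matrix.map_apply, Matrix.add_apply, Matrix.one_apply,
      Matrix.of_apply, map_add, apply_ite φ, map_zero, hvz]
    rw [map_one φ]


theorem aeval_nonneg {σ : Type*} (P : MvPolynomial σ ℕ) (v : σ → ℝ) (hv : ∀ i, 0 ≤ v i) :
    0 ≤ MvPolynomial.aeval v P := by
  induction P using MvPolynomial.induction_on with
  | C a => simpa using (a.cast_nonneg : (0:ℝ) ≤ a)
  | add p q hp hq => simpa [_root_.map_add] using add_nonneg hp hq
  | mul_X p i hp => simpa [_root_.map_mul] using mul_nonneg hp (hv i)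

end S9

/-- Every minor `det((az_0(x,z))_{I,J})` is a polynomial with
nonnegative integer coefficients in the variables `x_1,…,x_n,z_1,…,z_m`; in particular
it is nonnegative when all the `x_j` and `z_j` are positive reals. -/
theorem statement_9 (n m : ℕ) (hn : 2 ≤ n) (hm : m = n * (n - 1) / 2)
    (I J : Finset (Fin n)) (hIJ : I.card = J.card) :
    (∃ P : MvPolynomial (Fin (n + m)) ℕ,
      ∀ x z : ℕ → ℂ,
        subMinor (az0 n x z) I J =
          MvPolynomial.aeval
            (fun j : Fin (n + m) => if j.val < n then x (j.val + 1) else z (j.val - n + 1))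
            P) ∧
    (∀ x z : ℕ → ℝ,
      (∀ j : ℕ, 1 ≤ j → j ≤ n → 0 < x j) → (∀ j : ℕ, 1 ≤ j → j ≤ m → 0 < z j) →
        0 ≤ (subMinor (az0 n (fun j => (x j : ℂ)) (fun j => (z j : ℂ))) I J).re ∧
        (subMinor (az0 n (fun j => (x j : ℂ)) (fun j => (z j : ℂ))) I J).im = 0) := by
  classical
  have hlen : (word n).length = m := by
    have h2 := S9.length_word n
    rw [hm]
    calc (word n).length = (word n).length * 2 / 2 := by omega
      _ = (n - 1) * n / 2 := by rw [h2]
      _ = n * (n - 1) / 2 := by rw [Nat.mul_comm]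
  obtain ⟨Q, hQ⟩ := S9.AZ_natPoly n m I J
  have part1 : ∀ x z : ℕ → ℂ,
      subMinor (az0 n x z) I J =
        MvPolynomial.aeval
          (fun j : Fin (n + m) => if j.val < n then x (j.val + 1) else z (j.val - n + 1))
          Q := by
    intro x z
    set f : Fin (n + m) → ℂ :=
      fun j => if j.val < n then x (j.val + 1) else z (j.val - n + 1) with hfdef
    rw [S9.subMinor_eq_gminor, ← S9.AZ_map n m hlen x z f (fun j => rfl),
      S9.gminor_map, ← hQ]
    show (MvPolynomial.aeval f : MvPolynomial (Fin (n+m)) ℤ →ₐ[ℤ] ℂ)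
        (MvPolynomial.map (Nat.castRingHom ℤ) Q) = MvPolynomial.aeval f Q
    have halg : (Nat.castRingHom ℤ) = algebraMap ℕ ℤ := rfl
    rw [halg, MvPolynomial.aeval_map_algebraMap]
  refine ⟨⟨Q, part1⟩, ?_⟩
  intro x z hx hz
  set v : Fin (n + m) → ℝ :=
    fun j => if j.val < n then x (j.val + 1) else z (j.val - n + 1) with hvdef
  have hv : ∀ j, 0 ≤ v j := by
    intro j
    rw [hvdef]
    dsimp only
    split
    · exact le_of_lt (hx _ (by omega) (by omega))
    · have := j.isLt
      exact le_of_lt (hz _ (by omega) (by omega))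
  have hval : subMinor (az0 n (fun j => ((x j : ℝ) : ℂ)) (fun j => ((z j : ℝ) : ℂ))) I J =
      ((MvPolynomial.aeval v Q : ℝ) : ℂ) := by
    rw [part1]
    have hcomp : (fun j : Fin (n + m) =>
        if j.val < n then ((x (j.val + 1) : ℝ) : ℂ) else ((z (j.val - n + 1) : ℝ) : ℂ)) =
        fun j => ((v j : ℝ) : ℂ) := by
      funext j
      rw [hvdef]
      dsimp only
      split <;> rfl
    rw [hcomp]
    exact (MvPolynomial.comp_aeval_apply (f := v)
      Complex.ofRealHom.toNatAlgHom Q).symm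
  have hnn : 0 ≤ MvPolynomial.aeval v Q := S9.aeval_nonneg Q v hv
  rw [hval]
  exact ⟨by simpa using hnn, by simp⟩

end
end

section
/- Fix n ≥ 2 and m = n(n−1)/2. For every 1 ≤ i ≤ k ≤ n, the corner minor Δ_i^{(k)}(az_0(x,z)), viewed as a polynomial in the variables x_1,…,x_n,z_1,…,z_m, is a squarefree monomial with coefficient 1: it is the product x_{n−k+1}·x_{n−k+2}⋯x_{n−k+i} times a product of distinct variables among z_1,…,z_m. -/
open Matrix Finset Filter

noncomputable section

namespace St10

/-- entry formula for left multiplication by `ejmat` -/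
lemma ejmat_mul_apply {n : ℕ} (v : ℕ) (hv : v < n) (w : ℂ) (B : Matrix (Fin n) (Fin n) ℂ)
    (p q : Fin n) :
    (ejmat n v w * B) p q = B p q + if p.val + 1 = v then w * B ⟨v, hv⟩ q else 0 := by
  simp only [ejmat, add_mul, one_mul, Matrix.add_apply]
  congr 1
  rw [Matrix.mul_apply]
  by_cases hp : p.val + 1 = v
  · rw [if_pos hp, Finset.sum_eq_single ⟨v, hv⟩]
    · simp [Matrix.of_apply, hp]
    · intro t _ ht
      have h1 : ¬ (t.val + 1 = v + 1) := by
        intro h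
        exact ht (Fin.ext (by simp only [Fin.val_mk]; omega))
      simp only [Matrix.of_apply]
      rw [if_neg (fun hc => h1 hc.2), zero_mul]
    · simp
  · rw [if_neg hp]
    apply Finset.sum_eq_zero
    intro t _
    simp [Matrix.of_apply, hp]

lemma ejmat_mul_row_ne {n : ℕ} (v : ℕ) (w : ℂ) (B : Matrix (Fin n) (Fin n) ℂ)
    (p : Fin n) (h : p.val + 1 ≠ v) (q : Fin n) :
    (ejmat n v w * B) p q = B p q := by
  simp only [ejmat, add_mul, one_mul, Matrix.add_apply]
  have : (Matrix.of (fun p q : Fin n => if p.val + 1 = v ∧ q.val + 1 = v + 1 then w else 0) * B) p q = 0 := by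
    rw [Matrix.mul_apply]
    apply Finset.sum_eq_zero
    intro t _
    simp [Matrix.of_apply, h]
  rw [this, add_zero]

/-- predicate: every matrix in the list is an `ejmat` with letter in `[lo, hi]`. -/
def Good (n : ℕ) (l : List (Matrix (Fin n) (Fin n) ℂ)) (lo hi : ℕ) : Prop :=
  ∀ M ∈ l, ∃ v w, M = ejmat n v w ∧ lo ≤ v ∧ v ≤ hi

lemma Good.mono {n : ℕ} {l} {lo hi lo' hi' : ℕ} (h : Good n l lo hi)
    (h1 : lo' ≤ lo) (h2 : hi ≤ hi') : Good n l lo' hi' := by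
  intro M hM
  obtain ⟨v, w, rfl, hv1, hv2⟩ := h M hM
  exact ⟨v, w, rfl, le_trans h1 hv1, le_trans hv2 h2⟩

/-- rows not touched by any letter pass through the product. -/
lemma row_skip {n : ℕ} (l : List (Matrix (Fin n) (Fin n) ℂ)) (p : Fin n)
    (hl : ∀ M ∈ l, ∃ v w, M = ejmat n v w ∧ v ≠ p.val + 1) :
    ∀ (Y : Matrix (Fin n) (Fin n) ℂ) (q : Fin n), (l.prod * Y) p q = Y p q := by
  induction l with
  | nil => intro Y q; rw [List.prod_nil, one_mul]
  | cons M t ih =>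
    intro Y q
    obtain ⟨v, w, rfl, hv⟩ := hl M List.mem_cons_self
    rw [List.prod_cons, mul_assoc]
    rw [ejmat_mul_row_ne v w _ p (fun h => hv h.symm)]
    exact ih (fun M hM => hl M (List.mem_cons_of_mem _ hM)) Y q

/-- a column whose index is not a letter target passes through. -/
lemma col_skip {n : ℕ} (l : List (Matrix (Fin n) (Fin n) ℂ)) (c : Fin n)
    (hl : ∀ M ∈ l, ∃ v w, M = ejmat n v w ∧ v < n ∧ v ≠ c.val) :
    ∀ p : Fin n, l.prod p c = (1 : Matrix (Fin n) (Fin n) ℂ) p c := by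
  induction l with
  | nil => intro p; rw [List.prod_nil]
  | cons M t ih =>
    intro p
    obtain ⟨v, w, rfl, hvn, hvc⟩ := hl M List.mem_cons_self
    rw [List.prod_cons, ejmat_mul_apply v hvn w t.prod p c]
    have iht := ih (fun M hM => hl M (List.mem_cons_of_mem _ hM))
    rw [iht p]
    have h2 : t.prod ⟨v, hvn⟩ c = 0 := by
      rw [iht ⟨v, hvn⟩, Matrix.one_apply_ne]
      intro h; apply hvc; rw [← h]
    rw [h2, mul_zero]
    simp


/-- starting z-offset of block `b` (blocks are 1-based). -/
def off (n b : ℕ) : ℕ := ∑ c ∈ Finset.range (b-1), (n - 1 - c)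

lemma off_succ (n b : ℕ) (hb : 1 ≤ b) : off n (b+1) = off n b + (n - b) := by
  unfold off
  have : b + 1 - 1 = (b-1) + 1 := by omega
  rw [this, Finset.sum_range_succ]
  congr 1
  omega

lemma off_mono (n : ℕ) {b b' : ℕ} (h : b ≤ b') : off n b ≤ off n b' := by
  unfold off
  exact Finset.sum_le_sum_of_subset (Finset.range_subset_range.2 (by omega))

lemma off_top (n : ℕ) (hn : 1 ≤ n) : 2 * off n n = n * (n-1) := by
  unfold off
  have h1 : ∑ c ∈ Finset.range (n-1), (n - 1 - c) = ∑ c ∈ Finset.range (n-1), (c+1) := by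
    rw [← Finset.sum_range_reflect]
    apply Finset.sum_congr rfl
    intro c hc
    rw [Finset.mem_range] at hc
    omega
  obtain ⟨a, rfl⟩ : ∃ a, n = a + 1 := ⟨n - 1, by omega⟩
  simp only [Nat.add_sub_cancel] at h1 ⊢
  rw [h1, Finset.sum_add_distrib, Finset.sum_const, Finset.card_range, smul_eq_mul, mul_one]
  have h2 := Finset.sum_range_id_mul_two a
  cases a with
  | zero => simp
  | succ t =>
    have h3 : (t + 1) * (t + 1 - 1) = (t+1) * t := by rw [Nat.add_sub_cancel]
    have h4 : (t + 1 + 1) * (t + 1) = (t+1) * t + 2 * (t+1) := by ring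
    rw [h4]
    rw [h3] at h2
    linarith

/-- the tail (from letter index `j`, 0-based) of block `b`. -/
def pblockL (n : ℕ) (z : ℕ → ℂ) (b j : ℕ) : List (Matrix (Fin n) (Fin n) ℂ) :=
  (List.range (n - b - j)).map (fun s => ejmat n (j + s + 1) (z (off n b + j + s + 1)))

lemma pblockL_cons (n : ℕ) (z : ℕ → ℂ) (b j : ℕ) (hj : j < n - b) :
    pblockL n z b j = ejmat n (j+1) (z (off n b + j + 1)) :: pblockL n z b (j+1) := by
  unfold pblockL
  have : n - b - j = (n - b - (j+1)) + 1 := by omega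
  rw [this, List.range_succ_eq_map, List.map_cons, List.map_map]
  congr 1
  apply List.map_congr_left
  intro a _
  simp only [Function.comp_apply, Nat.succ_eq_add_one]
  have e1 : j + (a + 1) + 1 = j + 1 + a + 1 := by omega
  have e2 : off n b + j + (a + 1) + 1 = off n b + (j + 1) + a + 1 := by omega
  rw [e1, e2]

lemma pblockL_nil (n : ℕ) (z : ℕ → ℂ) (b : ℕ) : pblockL n z b (n-b) = [] := by
  unfold pblockL
  simp

lemma pblockL_good (n : ℕ) (z : ℕ → ℂ) (b j : ℕ) :
    Good n (pblockL n z b j) (j+1) (n-b) := by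
  intro M hM
  unfold pblockL at hM
  rw [List.mem_map] at hM
  obtain ⟨s, hs, rfl⟩ := hM
  rw [List.mem_range] at hs
  exact ⟨j+s+1, _, rfl, by omega, by omega⟩

/-- the product of blocks `b, b+1, …, n-1` as a list. -/
def restL (n : ℕ) (z : ℕ → ℂ) (b : ℕ) : List (Matrix (Fin n) (Fin n) ℂ) :=
  if h : b < n then pblockL n z b 0 ++ restL n z (b+1) else []
  termination_by n - b

lemma restL_cons_eq (n : ℕ) (z : ℕ → ℂ) (b : ℕ) (h : b < n) :
    restL n z b = pblockL n z b 0 ++ restL n z (b+1) := by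
  rw [restL, dif_pos h]

lemma restL_nil' (n : ℕ) (z : ℕ → ℂ) (b : ℕ) (h : n ≤ b) : restL n z b = [] := by
  rw [restL, dif_neg (by omega)]

lemma restL_good (n : ℕ) (z : ℕ → ℂ) (b : ℕ) : Good n (restL n z b) 1 (n-b) := by
  by_cases h : b < n
  · rw [restL, dif_pos h]
    intro M hM
    rw [List.mem_append] at hM
    rcases hM with hM | hM
    · exact (pblockL_good n z b 0).mono (by omega) (by omega) M hM
    · exact ((restL_good n z (b+1)).mono le_rfl (by omega)) M hM
  · rw [restL, dif_neg h]
    intro M hM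
    simp at hM
  termination_by n - b

def restM (n : ℕ) (z : ℕ → ℂ) (b : ℕ) : Matrix (Fin n) (Fin n) ℂ := (restL n z b).prod

lemma restM_eq (n : ℕ) (z : ℕ → ℂ) (b : ℕ) :
    restM n z b = (pblockL n z b 0).prod * restM n z (b+1) := by
  unfold restM
  by_cases h : b < n
  · rw [restL, dif_pos h, List.prod_append]
  · rw [restL, dif_neg h]
    have h1 : pblockL n z b 0 = [] := by
      unfold pblockL
      have : n - b - 0 = 0 := by omega
      rw [this]; simp
    have h2 : restL n z (b+1) = [] := by
      rw [restL, dif_neg (by omega)]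
    rw [h1, h2]
    simp [restM]


/-- the row-index value during the peeling process. -/
def rowV (n k i b j p : ℕ) : ℕ :=
  if p < i - b then n - k + p else if p = i - b then max (n - k + i - b) j else n - i + p

def rowF (n k i b j : ℕ) (hn : 0 < n) (p : Fin i) : Fin n :=
  ⟨min (rowV n k i b j p.val) (n-1), by omega⟩

lemma rowF_val {n k i b j : ℕ} (hn : 0 < n) (hb : 1 ≤ b) (hbi : b ≤ i) (hik : i ≤ k)
    (hkn : k ≤ n) (hj : j ≤ n - b) (p : Fin i) :
    (rowF n k i b j hn p).val = rowV n k i b j p.val := by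
  have hp := p.isLt
  simp only [rowF]
  rw [min_eq_left]
  unfold rowV
  split_ifs <;> omega

def colF (n i : ℕ) (hin : i ≤ n) (q : Fin i) : Fin n :=
  ⟨n - i + q.val, by have := q.isLt; omega⟩

def zround (n k i : ℕ) (z : ℕ → ℂ) (b j : ℕ) : ℂ :=
  ∏ j' ∈ Finset.Icc (max (j+1) (n - k + i - b + 1)) (n - b), z (off n b + j')

def tailZ (n k i : ℕ) (z : ℕ → ℂ) (b : ℕ) : ℂ :=
  ∏ b' ∈ Finset.Icc b i, ∏ j' ∈ Finset.Icc (n - k + i - b' + 1) (n - b'), z (off n b' + j')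


lemma off_one (n : ℕ) : off n 1 = 0 := by
  unfold off
  simp

attribute [irreducible] restM pblockL off ejmat

section Main

variable {n k i : ℕ}

lemma inner (z : ℕ → ℂ) (hn0 : 0 < n) (hin : i ≤ n) (hi1 : 1 ≤ i) (hik : i ≤ k) (hkn : k ≤ n)
    (b : ℕ) (hb1 : 1 ≤ b) (hbi : b ≤ i)
    (base : Matrix.det ((restM n z (b+1)).submatrix (rowF n k i b (n-b) hn0) (colF n i hin))
      = tailZ n k i z (b+1)) :
    ∀ d j, j + d = n - b →
      Matrix.det (((pblockL n z b j).prod * restM n z (b+1)).submatrix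
          (rowF n k i b j hn0) (colF n i hin))
        = zround n k i z b j * tailZ n k i z (b+1) := by
  intro d
  induction d with
  | zero =>
    intro j hj
    have hj' : j = n - b := by omega
    subst hj'
    rw [pblockL_nil, List.prod_nil, one_mul, base]
    have hz : zround n k i z b (n-b) = 1 := by
      unfold zround
      rw [Finset.Icc_eq_empty (by omega), Finset.prod_empty]
    rw [hz, one_mul]
  | succ d ih =>
    intro j hj
    have hjlt : j < n - b := by omega
    have hbn : b ≤ n := by omega
    have hjn : j + 1 < n := by omega
    rw [pblockL_cons n z b j hjlt, List.prod_cons, mul_assoc]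
    set w := z (off n b + j + 1) with hw
    set B := (pblockL n z b (j+1)).prod * restM n z (b+1) with hB
    have ihj := ih (j+1) (by omega)
    rw [← hB] at ihj
    -- column value n-b vanishing facts, used in the branch case
    have hcol0 : ∀ p : Fin n, p.val ≤ j → B p ⟨n - b, by omega⟩ = 0 := by
      intro p hp
      have h1 : B p ⟨n - b, by omega⟩ = restM n z (b+1) p ⟨n - b, by omega⟩ := by
        rw [hB]
        apply row_skip
        intro M hM
        obtain ⟨v, wv, rfl, hv1, hv2⟩ := pblockL_good n z b (j+1) M hM
        exact ⟨v, wv, rfl, by omega⟩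
      rw [h1]
      have h2 := col_skip (restL n z (b+1)) ⟨n - b, by omega⟩ ?_ p
      · rw [restM, h2, Matrix.one_apply_ne]
        intro hc
        have := congrArg Fin.val hc
        simp only [Fin.val_mk] at this
        omega
      · intro M hM
        obtain ⟨v, wv, rfl, hv1, hv2⟩ := restL_good n z (b+1) M hM
        refine ⟨v, wv, rfl, by omega, by simp only [Fin.val_mk]; omega⟩
    have hcolhi : ∀ p : Fin n, n - b < p.val → B p ⟨n - b, by omega⟩ = 0 := by
      intro p hp
      have hsplit : B = ((pblockL n z b (j+1)) ++ (restL n z (b+1))).prod * 1 := by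
        rw [List.prod_append, mul_one, hB, restM]
      rw [hsplit]
      rw [row_skip _ p ?_ 1 _]
      · rw [Matrix.one_apply_ne]
        intro hc
        have := congrArg Fin.val hc
        simp only [Fin.val_mk] at this
        omega
      · intro M hM
        rw [List.mem_append] at hM
        rcases hM with hM | hM
        · obtain ⟨v, wv, rfl, hv1, hv2⟩ := pblockL_good n z b (j+1) M hM
          exact ⟨v, wv, rfl, by omega⟩
        · obtain ⟨v, wv, rfl, hv1, hv2⟩ := restL_good n z (b+1) M hM
          exact ⟨v, wv, rfl, by omega⟩
    by_cases hcase : n - k + i - b ≤ j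
    · -- branch (S) case
      have hib : i - b < i := by omega
      have f1 : (rowF n k i b j hn0 ⟨i - b, hib⟩).val = j := by
        rw [rowF_val hn0 hb1 hbi hik hkn (by omega)]
        unfold rowV
        simp only [Fin.val_mk]
        split_ifs <;> omega
      have f3 : (rowF n k i b (j+1) hn0 ⟨i - b, hib⟩).val = j + 1 := by
        rw [rowF_val hn0 hb1 hbi hik hkn (by omega)]
        unfold rowV
        simp only [Fin.val_mk]
        split_ifs <;> omega
      have f2 : ∀ p : Fin i, p ≠ ⟨i - b, hib⟩ →
          (rowF n k i b j hn0 p).val ≠ j ∧ rowF n k i b j hn0 p = rowF n k i b (j+1) hn0 p := by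
        intro p hp
        have hpv : p.val ≠ i - b := fun hc => hp (Fin.ext (by rw [hc]))
        have hplt := p.isLt
        constructor
        · rw [rowF_val hn0 hb1 hbi hik hkn (by omega)]
          unfold rowV
          split_ifs <;> omega
        · apply Fin.ext
          rw [rowF_val hn0 hb1 hbi hik hkn (by omega), rowF_val hn0 hb1 hbi hik hkn (by omega)]
          unfold rowV
          split_ifs <;> omega
      have step1 : (ejmat n (j+1) w * B).submatrix (rowF n k i b j hn0) (colF n i hin)
          = Matrix.updateRow (B.submatrix (rowF n k i b j hn0) (colF n i hin)) ⟨i - b, hib⟩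
              ((B.submatrix (rowF n k i b j hn0) (colF n i hin) ⟨i - b, hib⟩)
                + w • (fun q => B ⟨j+1, hjn⟩ (colF n i hin q))) := by
        ext p q
        by_cases hp : p = ⟨i - b, hib⟩
        · subst hp
          rw [Matrix.updateRow_self]
          simp only [Matrix.submatrix_apply, Pi.add_apply, Pi.smul_apply, smul_eq_mul]
          rw [ejmat_mul_apply (j+1) hjn w B _ _]
          rw [if_pos (by omega)]
        · rw [Matrix.updateRow_ne hp]
          simp only [Matrix.submatrix_apply]
          exact ejmat_mul_row_ne _ _ _ _ (by have := (f2 p hp).1; omega) _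
      have step1b : Matrix.updateRow (B.submatrix (rowF n k i b j hn0) (colF n i hin)) ⟨i - b, hib⟩
            (fun q => B ⟨j+1, hjn⟩ (colF n i hin q))
          = B.submatrix (rowF n k i b (j+1) hn0) (colF n i hin) := by
        ext p q
        by_cases hp : p = ⟨i - b, hib⟩
        · subst hp
          rw [Matrix.updateRow_self]
          simp only [Matrix.submatrix_apply]
          congr 1
          exact (Fin.ext f3).symm
        · rw [Matrix.updateRow_ne hp]
          simp only [Matrix.submatrix_apply]
          rw [(f2 p hp).2]
      have hdetA0 : (B.submatrix (rowF n k i b j hn0) (colF n i hin)).det = 0 := by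
        apply Matrix.det_eq_zero_of_column_eq_zero ⟨i - b, hib⟩
        intro p
        have hcv : colF n i hin ⟨i - b, hib⟩ = ⟨n - b, by omega⟩ := by
          apply Fin.ext
          simp only [colF, Fin.val_mk]
          omega
        simp only [Matrix.submatrix_apply, hcv]
        rcases le_or_gt p.val (i - b) with hple | hpgt
        · apply hcol0
          rw [rowF_val hn0 hb1 hbi hik hkn (by omega)]
          have hplt := p.isLt
          unfold rowV
          split_ifs <;> omega
        · apply hcolhi
          rw [rowF_val hn0 hb1 hbi hik hkn (by omega)]
          have hplt := p.isLt
          unfold rowV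
          split_ifs <;> omega
      rw [step1, Matrix.det_updateRow_add, Matrix.det_updateRow_smul,
        Matrix.updateRow_eq_self, step1b, hdetA0, zero_add, ihj]
      have hzr : zround n k i z b j = w * zround n k i z b (j+1) := by
        unfold zround
        rw [max_eq_left (by omega), max_eq_left (by omega)]
        rw [show Finset.Icc (j+1) (n-b) = insert (j+1) (Finset.Icc (j+2) (n-b)) from by
          ext t; simp only [Finset.mem_Icc, Finset.mem_insert]; omega]
        rw [Finset.prod_insert (by simp only [Finset.mem_Icc]; omega)]
        rw [hw]
        congr 2 <;> omega
      rw [hzr]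
      ring
    · -- no-branch case
      have hrw : rowF n k i b j hn0 = rowF n k i b (j+1) hn0 := by
        funext p
        apply Fin.ext
        rw [rowF_val hn0 hb1 hbi hik hkn (by omega), rowF_val hn0 hb1 hbi hik hkn (by omega)]
        have hplt := p.isLt
        unfold rowV
        split_ifs <;> omega
      have hzr : zround n k i z b j = zround n k i z b (j+1) := by
        unfold zround
        rw [max_eq_right (by omega), max_eq_right (by omega)]
      rcases lt_or_ge j (n - k) with hjk | hjk
      · -- no row touched
        have heq : (ejmat n (j+1) w * B).submatrix (rowF n k i b j hn0) (colF n i hin)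
            = B.submatrix (rowF n k i b (j+1) hn0) (colF n i hin) := by
          ext p q
          rw [hrw]
          simp only [Matrix.submatrix_apply]
          apply ejmat_mul_row_ne
          rw [rowF_val hn0 hb1 hbi hik hkn (by omega)]
          have hplt := p.isLt
          unfold rowV
          split_ifs <;> omega
        rw [heq, ihj, hzr]
      · -- row operation within the submatrix
        have hs1i : j - (n-k) < i := by omega
        have hs2i : j + 1 - (n-k) < i := by omega
        have g1 : (rowF n k i b j hn0 ⟨j - (n-k), hs1i⟩).val = j := by
          rw [rowF_val hn0 hb1 hbi hik hkn (by omega)]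
          unfold rowV
          simp only [Fin.val_mk]
          split_ifs <;> omega
        have g2 : (rowF n k i b j hn0 ⟨j + 1 - (n-k), hs2i⟩).val = j + 1 := by
          rw [rowF_val hn0 hb1 hbi hik hkn (by omega)]
          unfold rowV
          simp only [Fin.val_mk]
          split_ifs <;> omega
        have g3 : ∀ p : Fin i, p ≠ ⟨j - (n-k), hs1i⟩ → (rowF n k i b j hn0 p).val ≠ j := by
          intro p hp
          have hpv : p.val ≠ j - (n-k) := fun hc => hp (Fin.ext (by rw [hc]))
          have hplt := p.isLt
          rw [rowF_val hn0 hb1 hbi hik hkn (by omega)]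
          unfold rowV
          split_ifs <;> omega
        have step1 : (ejmat n (j+1) w * B).submatrix (rowF n k i b j hn0) (colF n i hin)
            = Matrix.updateRow (B.submatrix (rowF n k i b j hn0) (colF n i hin)) ⟨j - (n-k), hs1i⟩
                ((B.submatrix (rowF n k i b j hn0) (colF n i hin)) ⟨j - (n-k), hs1i⟩
                  + w • (B.submatrix (rowF n k i b j hn0) (colF n i hin)) ⟨j + 1 - (n-k), hs2i⟩) := by
          ext p q
          by_cases hp : p = ⟨j - (n-k), hs1i⟩
          · subst hp
            rw [Matrix.updateRow_self]
            simp only [Matrix.submatrix_apply, Pi.add_apply, Pi.smul_apply, smul_eq_mul]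
            rw [ejmat_mul_apply (j+1) hjn w B _ _, if_pos (by omega)]
            have hfin : (⟨j+1, hjn⟩ : Fin n) = rowF n k i b j hn0 ⟨j + 1 - (n-k), hs2i⟩ := by
              apply Fin.ext
              rw [g2]
            rw [hfin]
          · rw [Matrix.updateRow_ne hp]
            simp only [Matrix.submatrix_apply]
            exact ejmat_mul_row_ne _ _ _ _ (by have := g3 p hp; omega) _
        have hs12 : (⟨j - (n-k), hs1i⟩ : Fin i) ≠ ⟨j + 1 - (n-k), hs2i⟩ := by
          intro hc
          have := congrArg Fin.val hc
          simp only [Fin.val_mk] at this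
          omega
        rw [step1, Matrix.det_updateRow_add_smul_self _ hs12 w, hrw, ihj, hzr]


lemma base_id (z : ℕ → ℂ) (hn0 : 0 < n) (hin : i ≤ n) (hi1 : 1 ≤ i) (hik : i ≤ k) (hkn : k ≤ n) :
    Matrix.det ((restM n z (i+1)).submatrix (rowF n k i i (n-i) hn0) (colF n i hin))
      = tailZ n k i z (i+1) := by
  have hmat : (restM n z (i+1)).submatrix (rowF n k i i (n-i) hn0) (colF n i hin)
      = (1 : Matrix (Fin i) (Fin i) ℂ) := by
    ext p q
    have hplt := p.isLt
    have hrv : (rowF n k i i (n-i) hn0 p).val = n - i + p.val := by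
      rw [rowF_val hn0 hi1 le_rfl hik hkn le_rfl]
      unfold rowV
      split_ifs <;> omega
    simp only [Matrix.submatrix_apply]
    rw [restM, ← mul_one ((restL n z (i+1)).prod)]
    rw [row_skip _ _ ?_ 1 _]
    · rcases eq_or_ne p q with hpq | hpq
      · subst hpq
        have hrc : rowF n k i i (n-i) hn0 p = colF n i hin p := by
          apply Fin.ext
          rw [hrv]
          simp only [colF, Fin.val_mk]
        rw [hrc, Matrix.one_apply_eq, Matrix.one_apply_eq]
      · rw [Matrix.one_apply_ne hpq, Matrix.one_apply_ne]
        intro hc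
        have hcv := congrArg Fin.val hc
        rw [hrv] at hcv
        simp only [colF, Fin.val_mk] at hcv
        exact hpq (Fin.ext (by omega))
    · intro M hM
      obtain ⟨v, wv, rfl, hv1, hv2⟩ := restL_good n z (i+1) M hM
      refine ⟨v, wv, rfl, ?_⟩
      rw [hrv]
      omega
  rw [hmat, Matrix.det_one]
  unfold tailZ
  rw [Finset.Icc_eq_empty (by omega), Finset.prod_empty]

lemma tailZ_step (z : ℕ → ℂ) (b : ℕ) (hb1 : 1 ≤ b) (hbi : b ≤ i) :
    zround n k i z b 0 * tailZ n k i z (b+1) = tailZ n k i z b := by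
  unfold zround tailZ
  rw [max_eq_right (by omega)]
  rw [show Finset.Icc b i = insert b (Finset.Icc (b+1) i) from by
    ext t; simp only [Finset.mem_Icc, Finset.mem_insert]; omega]
  rw [Finset.prod_insert (by simp only [Finset.mem_Icc]; omega)]

lemma rowF_shift (z : ℕ → ℂ) (hn0 : 0 < n) {b : ℕ} (hb1 : 1 ≤ b) (hbi : b + 1 ≤ i)
    (hik : i ≤ k) (hkn : k ≤ n) :
    rowF n k i b (n-b) hn0 = rowF n k i (b+1) 0 hn0 := by
  funext p
  apply Fin.ext
  have hplt := p.isLt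
  rw [rowF_val hn0 hb1 (by omega) hik hkn le_rfl,
    rowF_val hn0 (by omega) hbi hik hkn (by omega)]
  unfold rowV
  split_ifs <;> omega

lemma outer (z : ℕ → ℂ) (hn0 : 0 < n) (hin : i ≤ n) (hi1 : 1 ≤ i) (hik : i ≤ k) (hkn : k ≤ n) :
    ∀ e b, 1 ≤ b → b + e = i →
      Matrix.det ((restM n z b).submatrix (rowF n k i b 0 hn0) (colF n i hin)) = tailZ n k i z b := by
  intro e
  induction e with
  | zero =>
    intro b hb1 hbe
    have hbi : b = i := by omega
    subst hbi
    have h := inner z hn0 hin hi1 hik hkn b hb1 le_rfl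
      (base_id z hn0 hin hi1 hik hkn) (n - b) 0 (by omega)
    rw [restM_eq n z b, h, tailZ_step z b hb1 le_rfl]
  | succ e ihe =>
    intro b hb1 hbe
    have hbi : b + 1 ≤ i := by omega
    have prev := ihe (b+1) (by omega) (by omega)
    have base : Matrix.det ((restM n z (b+1)).submatrix (rowF n k i b (n-b) hn0) (colF n i hin))
        = tailZ n k i z (b+1) := by
      rw [rowF_shift z hn0 hb1 hbi hik hkn]
      exact prev
    have h := inner z hn0 hin hi1 hik hkn b hb1 (by omega) base (n - b) 0 (by omega)
    rw [restM_eq n z b, h, tailZ_step z b hb1 (by omega)]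

end Main

section Words

variable (n : ℕ) (z : ℕ → ℂ)

lemma enumFrom_append' {α : Type*} : ∀ (l₁ l₂ : List α) (o : ℕ),
    List.zipIdx (l₁ ++ l₂) o = List.zipIdx l₁ o ++ List.zipIdx l₂ (o + l₁.length) := by
  intro l₁
  induction l₁ with
  | nil => intro l₂ o; simp
  | cons a t ih =>
    intro l₂ o
    show (a, o) :: List.zipIdx (t ++ l₂) (o+1)
        = ((a, o) :: List.zipIdx t (o+1)) ++ List.zipIdx l₂ (o + (a :: t).length)
    rw [ih l₂ (o+1), List.cons_append, List.length_cons,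
      show o + 1 + t.length = o + (t.length + 1) from by omega]

lemma enumap : ∀ (L o : ℕ),
    (List.zipIdx ((List.range L).map (· + 1)) o).map
        (fun q : ℕ × ℕ => ejmat n q.1 (z (q.2 + 1)))
      = (List.range L).map (fun s => ejmat n (s+1) (z (o + s + 1))) := by
  intro L
  induction L with
  | zero => intro o; simp
  | succ L ih =>
    intro o
    rw [List.range_succ, List.map_append, List.map_append, enumFrom_append']
    rw [List.map_append, ih o]
    congr 1
    simp only [List.length_map, List.length_range]
    simp [List.zipIdx]

lemma pblockL_zero (b : ℕ) :
    pblockL n z b 0 = (List.range (n-b)).map (fun s => ejmat n (s+1) (z (off n b + s + 1))) := by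
  rw [pblockL]
  apply List.map_congr_left
  intro s _
  norm_num

lemma words : ∀ c, c ≤ n - 1 →
    (List.zipIdx
        (((List.range c).reverse).flatMap (fun r => (List.range (r+1)).map (· + 1))) (off n (n-c))).map
      (fun q : ℕ × ℕ => ejmat n q.1 (z (q.2 + 1)))
      = restL n z (n-c) := by
  intro c
  induction c with
  | zero =>
    intro _
    simp only [Nat.sub_zero, List.range_zero, List.reverse_nil, List.flatMap_nil,
      List.zipIdx_nil, List.map_nil]
    rw [restL_nil' n z n le_rfl]
  | succ c ih =>
    intro hc
    have e1 : n - (c+1) + 1 = n - c := by omega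
    have e2 : n - (n - (c+1)) = c + 1 := by omega
    rw [List.range_succ, List.reverse_append]
    simp only [List.reverse_singleton, List.singleton_append, List.flatMap_cons]
    rw [enumFrom_append', List.map_append]
    rw [enumap]
    rw [show ((List.range (c+1)).map (· + 1)).length = c + 1 from by simp]
    rw [show off n (n-(c+1)) + (c+1) = off n (n-c) from by
      have h2 := off_succ n (n-(c+1)) (by omega)
      rw [e1] at h2
      rw [h2, e2]]
    rw [ih (by omega)]
    rw [restL_cons_eq n z (n-(c+1)) (by omega), e1]
    congr 1
    rw [pblockL_zero, e2]

lemma az0_eq (x : ℕ → ℂ) (hn : 2 ≤ n) :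
    az0 n x z = Matrix.diagonal (fun p : Fin n => x (p.val+1)) * restM n z 1 := by
  unfold az0 restM
  congr 1
  have h := words n z (n-1) le_rfl
  have e1 : n - (n-1) = 1 := by omega
  rw [e1, off_one] at h
  rw [word]
  exact congrArg List.prod h

end Words

end St10

open St10 in
/-- Each corner minor `Δ_i^{(k)}(az_0(x,z))` is a squarefree monomial
with coefficient `1`: the product `x_{n−k+1}⋯x_{n−k+i}` times a product of distinct
variables among `z_1,…,z_m`. -/
theorem statement_10 (n m : ℕ) (hn : 2 ≤ n) (hm : m = n * (n - 1) / 2)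
    (i k : ℕ) (hi : 1 ≤ i) (hik : i ≤ k) (hkn : k ≤ n) :
    ∃ S : Finset ℕ, S ⊆ Finset.Icc 1 m ∧
      ∀ x z : ℕ → ℂ,
        cornerMinor n k i (az0 n x z) =
          (∏ j ∈ Finset.Icc (n - k + 1) (n - k + i), x j) * ∏ j ∈ S, z j := by
  have hn0 : 0 < n := by omega
  have hin : i ≤ n := le_trans hik hkn
  have hA := off_top n (by omega)
  refine ⟨(Finset.Icc 1 i).biUnion
    (fun b => (Finset.Icc (n-k+i-b+1) (n-b)).image (fun j' => off n b + j')), ?_, ?_⟩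
  · intro a ha
    simp only [Finset.mem_biUnion, Finset.mem_image, Finset.mem_Icc] at ha ⊢
    obtain ⟨b, ⟨hb1, hbi⟩, j', ⟨hj1, hj2⟩, rfl⟩ := ha
    have h1 := off_succ n b hb1
    have h2 := off_mono n (show b + 1 ≤ n by omega)
    set a := n * (n - 1) with haa
    constructor
    · omega
    · omega
  · intro x z
    have key : ∀ b1 b2 j1 j2 : ℕ, b1 < b2 → 1 ≤ b1 → j1 ≤ n - b1 → 1 ≤ j2 →
        off n b1 + j1 ≠ off n b2 + j2 := by
      intro b1 b2 j1 j2 hlt hb1 hj1 hj2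
      have h1 := off_succ n b1 hb1
      have h2 := off_mono n (show b1 + 1 ≤ b2 by omega)
      omega
    have hdisj : (↑(Finset.Icc 1 i) : Set ℕ).PairwiseDisjoint
        (fun b => (Finset.Icc (n-k+i-b+1) (n-b)).image (fun j' => off n b + j')) := by
      intro b1 h1 b2 h2 hne
      simp only [Finset.coe_Icc, Set.mem_Icc] at h1 h2
      apply Finset.disjoint_left.mpr
      intro a ha1 ha2
      simp only [Finset.mem_image, Finset.mem_Icc] at ha1 ha2
      obtain ⟨j1, ⟨hj11, hj12⟩, he1⟩ := ha1
      obtain ⟨j2, ⟨hj21, hj22⟩, he2⟩ := ha2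
      rcases lt_or_gt_of_ne hne with hlt | hlt
      · exact key b1 b2 j1 j2 hlt (by omega) (by omega) (by omega) (he1.trans he2.symm)
      · exact key b2 b1 j2 j1 hlt (by omega) (by omega) (by omega) (he2.trans he1.symm)
    rw [cornerMinor, dif_pos ⟨hi, hik, hkn⟩]
    have haz := az0_eq n z x hn
    have hM : (Matrix.of fun p q : Fin i =>
          az0 n x z ⟨n - k + p.val, by have := p.isLt; omega⟩
            ⟨n - i + q.val, by have := q.isLt; omega⟩)
        = Matrix.diagonal (fun p : Fin i => x (n - k + p.val + 1)) *
            ((restM n z 1).submatrix (rowF n k i 1 0 hn0) (colF n i hin)) := by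
      ext p q
      have hplt := p.isLt
      have hρ : (⟨n - k + p.val, by omega⟩ : Fin n) = rowF n k i 1 0 hn0 p := by
        apply Fin.ext
        rw [rowF_val hn0 le_rfl hi hik hkn (by omega)]
        unfold rowV
        simp only [Fin.val_mk]
        split_ifs <;> omega
      have hκ : (⟨n - i + q.val, by have := q.isLt; omega⟩ : Fin n) = colF n i hin q := rfl
      rw [Matrix.of_apply, haz, hρ, hκ, Matrix.diagonal_mul, Matrix.diagonal_mul]
      simp only [Matrix.submatrix_apply]
      congr 2
      rw [rowF_val hn0 le_rfl hi hik hkn (by omega)]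
      unfold rowV
      split_ifs <;> omega
    rw [hM, Matrix.det_mul, Matrix.det_diagonal]
    rw [outer z hn0 hin hi hik hkn (i-1) 1 le_rfl (by omega)]
    congr 1
    · rw [Fin.prod_univ_eq_prod_range (fun p => x (n - k + p + 1)) i]
      rw [← Finset.Ico_add_one_right_eq_Icc, Finset.prod_Ico_eq_prod_range]
      rw [show n - k + i + 1 - (n - k + 1) = i from by omega]
      apply Finset.prod_congr rfl
      intro t _
      congr 1
      omega
    · rw [Finset.prod_biUnion hdisj]
      unfold tailZ
      apply Finset.prod_congr rfl
      intro b _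
      rw [Finset.prod_image]
      intro t1 _ t2 _ he
      simp only at he
      omega


end
end

section
/- Fix n ≥ 2 and m = n(n−1)/2. The map (x,z) ↦ az_0(x,z), restricted to x ∈ (0,∞)^n and z ∈ (ℂ∖{0})^m, is injective, and its image is exactly the set of matrices b ∈ AN such that Δ_i^{(k)}(b) ≠ 0 for all 1 ≤ i < k ≤ n. -/
open Matrix Finset Filter

noncomputable section

namespace S11
open Matrix

/-- Product of elementary matrices from a list of (letter, value) pairs. -/
def Pmat (n : ℕ) (l : List (ℕ × ℂ)) : Matrix (Fin n) (Fin n) ℂ :=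
  (l.map fun a => ejmat n a.1 a.2).prod

lemma Pmat_nil (n : ℕ) : Pmat n [] = 1 := rfl

lemma Pmat_cons (n : ℕ) (a : ℕ × ℂ) (l : List (ℕ × ℂ)) :
    Pmat n (a :: l) = ejmat n a.1 a.2 * Pmat n l := by
  simp [Pmat]

lemma Pmat_append (n : ℕ) (l1 l2 : List (ℕ × ℂ)) :
    Pmat n (l1 ++ l2) = Pmat n l1 * Pmat n l2 := by
  simp [Pmat]

lemma ejmat_mul_apply (n j : ℕ) (w : ℂ) (A : Matrix (Fin n) (Fin n) ℂ) (p q : Fin n) :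
    (ejmat n j w * A) p q =
      A p q + if h : p.val + 1 = j ∧ j < n then w * A ⟨j, h.2⟩ q else 0 := by
  rw [ejmat, add_mul, one_mul, Matrix.add_apply]
  congr 1
  rw [Matrix.mul_apply]
  by_cases h : p.val + 1 = j ∧ j < n
  · rw [dif_pos h]
    rw [Finset.sum_eq_single (⟨j, h.2⟩ : Fin n)]
    · simp [h.1]
    · intro s _ hs
      have : ¬ (p.val + 1 = j ∧ s.val + 1 = j + 1) := by
        rintro ⟨h1, h2⟩
        exact hs (Fin.ext (by simp only [Fin.val_mk]; omega))
      simp only [Matrix.of_apply]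
      rw [if_neg this, zero_mul]
    · intro hs; exact absurd (Finset.mem_univ _) hs
  · rw [dif_neg h]
    apply Finset.sum_eq_zero
    intro s _
    have : ¬ (p.val + 1 = j ∧ s.val + 1 = j + 1) := by
      rintro ⟨h1, h2⟩
      exact h ⟨h1, by omega⟩
    simp only [Matrix.of_apply]
    rw [if_neg this, zero_mul]

lemma ejmat_mul_apply_ne (n j : ℕ) (w : ℂ) (A : Matrix (Fin n) (Fin n) ℂ) (p q : Fin n)
    (h : p.val + 1 ≠ j) : (ejmat n j w * A) p q = A p q := by
  rw [ejmat_mul_apply]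
  rw [dif_neg (by tauto)]
  ring

lemma ejmat_mul_apply_eq (n j : ℕ) (w : ℂ) (A : Matrix (Fin n) (Fin n) ℂ) (p q : Fin n)
    (h : p.val + 1 = j) (hj : j < n) :
    (ejmat n j w * A) p q = A p q + w * A ⟨j, hj⟩ q := by
  rw [ejmat_mul_apply, dif_pos ⟨h, hj⟩]

lemma Pmat_mul_row_ne (n : ℕ) (l : List (ℕ × ℂ)) (A : Matrix (Fin n) (Fin n) ℂ)
    (p q : Fin n) (h : ∀ a ∈ l, a.1 ≠ p.val + 1) :
    (Pmat n l * A) p q = A p q := by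
  induction l with
  | nil => simp [Pmat_nil]
  | cons a t ih =>
      rw [Pmat_cons, mul_assoc, ejmat_mul_apply_ne _ _ _ _ _ _
        (fun hc => (h a List.mem_cons_self) hc.symm)]
      exact ih (fun b hb => h b (List.mem_cons_of_mem a hb))

/-- Upper triangular with unit diagonal. -/
def UT {n : ℕ} (A : Matrix (Fin n) (Fin n) ℂ) : Prop :=
  (∀ p q : Fin n, (q : ℕ) < p → A p q = 0) ∧ ∀ p : Fin n, A p p = 1

lemma UT_one (n : ℕ) : UT (1 : Matrix (Fin n) (Fin n) ℂ) := by
  constructor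
  · intro p q h
    rw [Matrix.one_apply_ne (fun hc => by subst hc; omega)]
  · intro p; simp

lemma UT_mul {n : ℕ} {A B : Matrix (Fin n) (Fin n) ℂ} (hA : UT A) (hB : UT B) :
    UT (A * B) := by
  constructor
  · intro p q h
    rw [Matrix.mul_apply]
    apply Finset.sum_eq_zero
    intro s _
    by_cases hs : (s : ℕ) < p
    · rw [hA.1 p s hs, zero_mul]
    · rw [hB.1 s q (by omega), mul_zero]
  · intro p
    rw [Matrix.mul_apply]
    rw [Finset.sum_eq_single p]
    · rw [hA.2, hB.2, one_mul]
    · intro s _ hs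
      by_cases h : (s : ℕ) < p
      · rw [hA.1 p s h, zero_mul]
      · rw [hB.1 s p (by have := Fin.val_ne_of_ne hs; omega), mul_zero]
    · intro hs; exact absurd (Finset.mem_univ _) hs

lemma UT_ejmat (n j : ℕ) (w : ℂ) : UT (ejmat n j w) := by
  constructor
  · intro p q h
    rw [ejmat, Matrix.add_apply, Matrix.one_apply_ne (fun hc => by subst hc; omega)]
    have : ¬ (p.val + 1 = j ∧ q.val + 1 = j + 1) := by rintro ⟨h1, h2⟩; omega
    simp only [Matrix.of_apply]
    rw [if_neg this, add_zero]
  · intro p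
    rw [ejmat, Matrix.add_apply, Matrix.one_apply_eq]
    have : ¬ (p.val + 1 = j ∧ p.val + 1 = j + 1) := by rintro ⟨h1, h2⟩; omega
    simp only [Matrix.of_apply]
    rw [if_neg this, add_zero]

lemma UT_Pmat (n : ℕ) (l : List (ℕ × ℂ)) : UT (Pmat n l) := by
  induction l with
  | nil => exact UT_one n
  | cons a t ih => rw [Pmat_cons]; exact UT_mul (UT_ejmat n a.1 a.2) ih

end S11
namespace S11
open Matrix

lemma Pmat_cons' (n j : ℕ) (w : ℂ) (l : List (ℕ × ℂ)) :
    Pmat n ((j, w) :: l) = ejmat n j w * Pmat n l := by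
  simp [Pmat]

/-- The first block `(1, z 1), …, (d, z d)`. -/
def FB (d : ℕ) (z : ℕ → ℂ) : List (ℕ × ℂ) :=
  (List.range d).map fun t => (t + 1, z (t + 1))

lemma FB_letters (d : ℕ) (z : ℕ → ℂ) (a : ℕ × ℂ) (ha : a ∈ FB d z) :
    1 ≤ a.1 ∧ a.1 ≤ d := by
  rw [FB, List.mem_map] at ha
  obtain ⟨t, ht, rfl⟩ := ha
  rw [List.mem_range] at ht
  omega

lemma FB_split (d p : ℕ) (z : ℕ → ℂ) (hp : p < d) :
    FB d z = FB p z ++ (p + 1, z (p + 1)) ::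
      ((List.range (d - p - 1)).map fun t => (p + t + 2, z (p + t + 2))) := by
  have h1 : d = p + (d - p - 1 + 1) := by omega
  conv_lhs => rw [FB, h1]
  simp only [List.range_add, List.map_append, List.range_succ_eq_map, List.map_cons,
    List.map_map]
  congr 1

/-- Row recurrence for multiplication by the first block: rows at or below `d` unchanged. -/
lemma FB_mul_row_ge (n d : ℕ) (z : ℕ → ℂ) (M : Matrix (Fin n) (Fin n) ℂ)
    (p q : Fin n) (hp : d ≤ p.val) :
    (Pmat n (FB d z) * M) p q = M p q := by
  apply Pmat_mul_row_ne
  intro a ha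
  have := FB_letters d z a ha
  omega

lemma FB_mul_row_lt (n d : ℕ) (hd : d < n) (z : ℕ → ℂ) (M : Matrix (Fin n) (Fin n) ℂ)
    (p q : Fin n) (hp : p.val < d) :
    (Pmat n (FB d z) * M) p q
      = M p q + z (p.val + 1) * (Pmat n (FB d z) * M) ⟨p.val + 1, by omega⟩ q := by
  rw [FB_split d p.val z hp, Pmat_append, Pmat_cons']
  simp only [mul_assoc]
  have hlet1 : ∀ a ∈ FB p.val z, a.1 ≠ p.val + 1 := by
    intro a ha
    have := FB_letters p.val z a ha
    omega
  have hlet2 : ∀ a ∈ (List.range (d - p.val - 1)).map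
      (fun t => (p.val + t + 2, z (p.val + t + 2))), p.val + 2 ≤ a.1 := by
    intro a ha
    rw [List.mem_map] at ha
    obtain ⟨t, ht, rfl⟩ := ha
    omega
  have hrow : (Pmat n (FB p.val z) * (ejmat n (p.val + 1) (z (p.val + 1)) *
      (Pmat n ((List.range (d - p.val - 1)).map fun t => (p.val + t + 2, z (p.val + t + 2))) * M)))
        ⟨p.val + 1, by omega⟩ q
      = (Pmat n ((List.range (d - p.val - 1)).map fun t => (p.val + t + 2, z (p.val + t + 2))) * M)
        ⟨p.val + 1, by omega⟩ q := by
    rw [Pmat_mul_row_ne n _ _ ⟨p.val + 1, by omega⟩ q (by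
      intro a ha
      have := FB_letters p.val z a ha
      simp only [Fin.val_mk]
      omega)]
    rw [ejmat_mul_apply_ne n (p.val + 1) (z (p.val + 1)) _ ⟨p.val + 1, by omega⟩ q
      (by simp only [Fin.val_mk]; omega)]
  rw [Pmat_mul_row_ne n (FB p.val z) _ p q hlet1]
  rw [ejmat_mul_apply_eq n (p.val + 1) (z (p.val + 1)) _ p q rfl (by omega)]
  rw [Pmat_mul_row_ne n _ M p q (by intro a ha; have := hlet2 a ha; omega)]
  congr 1
  exact congrArg (z (p.val + 1) * ·) hrow.symm

/-- Characterization of `N = Pmat (FB d z) * M` by the row recurrence. -/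
lemma FB_char (n d : ℕ) (hd : d < n) (z : ℕ → ℂ) (M N : Matrix (Fin n) (Fin n) ℂ) :
    N = Pmat n (FB d z) * M ↔
      ∀ p q : Fin n, N p q = M p q +
        if h : p.val < d then z (p.val + 1) * N ⟨p.val + 1, by omega⟩ q else 0 := by
  constructor
  · rintro rfl p q
    by_cases hp : p.val < d
    · rw [dif_pos hp]
      exact FB_mul_row_lt n d hd z M p q hp
    · rw [dif_neg hp, add_zero]
      exact FB_mul_row_ge n d z M p q (by omega)
  · intro hrec
    set N₀ := Pmat n (FB d z) * M with hN₀
    have hrec₀ : ∀ p q : Fin n, N₀ p q = M p q +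
        if h : p.val < d then z (p.val + 1) * N₀ ⟨p.val + 1, by omega⟩ q else 0 := by
      intro p q
      by_cases hp : p.val < d
      · rw [dif_pos hp]; exact FB_mul_row_lt n d hd z M p q hp
      · rw [dif_neg hp, add_zero]; exact FB_mul_row_ge n d z M p q (by omega)
    have key : ∀ t : ℕ, ∀ p q : Fin n, d ≤ p.val + t → N p q = N₀ p q := by
      intro t
      induction t with
      | zero =>
          intro p q hp
          rw [hrec p q, hrec₀ p q, dif_neg (by omega), dif_neg (by omega)]
      | succ t ih =>
          intro p q hp
          by_cases hpd : p.val < d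
          · rw [hrec p q, hrec₀ p q, dif_pos hpd, dif_pos hpd,
              ih ⟨p.val + 1, by omega⟩ q (by simp only [Fin.val_mk]; omega)]
          · rw [hrec p q, hrec₀ p q, dif_neg hpd, dif_neg hpd]
    ext p q
    exact key d p q (by omega)

/-- Embedding of a `d × d` matrix into the top-left corner of a `(d+1) × (d+1)` matrix. -/
def emb {d : ℕ} (B : Matrix (Fin d) (Fin d) ℂ) : Matrix (Fin (d + 1)) (Fin (d + 1)) ℂ :=
  Matrix.of fun p q =>
    if h : p.val < d ∧ q.val < d then B ⟨p.val, h.1⟩ ⟨q.val, h.2⟩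
    else if p = q then 1 else 0

lemma emb_apply_lt {d : ℕ} (B : Matrix (Fin d) (Fin d) ℂ) {p q : Fin (d + 1)}
    (hp : p.val < d) (hq : q.val < d) : emb B p q = B ⟨p.val, hp⟩ ⟨q.val, hq⟩ := by
  simp only [emb, Matrix.of_apply]
  rw [dif_pos ⟨hp, hq⟩]

lemma emb_apply_cast {d : ℕ} (B : Matrix (Fin d) (Fin d) ℂ) (p q : Fin d) :
    emb B (Fin.castSucc p) (Fin.castSucc q) = B p q := by
  rw [emb_apply_lt B p.isLt q.isLt]
  congr 1 <;> exact Fin.ext (by simp)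

lemma emb_apply_col_last {d : ℕ} (B : Matrix (Fin d) (Fin d) ℂ) {p : Fin (d + 1)}
    (hp : p.val < d) : emb B p (Fin.last d) = 0 := by
  simp only [emb, Matrix.of_apply]
  rw [dif_neg (by simp only [Fin.val_last]; omega),
    if_neg (by intro hc; rw [hc, Fin.val_last] at hp; omega)]

lemma emb_apply_row_last {d : ℕ} (B : Matrix (Fin d) (Fin d) ℂ) {q : Fin (d + 1)}
    (hq : q.val < d) : emb B (Fin.last d) q = 0 := by
  simp only [emb, Matrix.of_apply]
  rw [dif_neg (by simp only [Fin.val_last]; omega),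
    if_neg (by intro hc; rw [← hc, Fin.val_last] at hq; omega)]

lemma emb_apply_last_last {d : ℕ} (B : Matrix (Fin d) (Fin d) ℂ) :
    emb B (Fin.last d) (Fin.last d) = 1 := by
  simp only [emb, Matrix.of_apply]
  rw [dif_neg (by simp only [Fin.val_last]; omega)]
  simp

lemma emb_one (d : ℕ) : emb (1 : Matrix (Fin d) (Fin d) ℂ) = 1 := by
  ext p q
  induction p using Fin.lastCases with
  | last =>
      induction q using Fin.lastCases with
      | last => rw [emb_apply_last_last, Matrix.one_apply_eq]
      | cast q =>
          rw [emb_apply_row_last _ q.isLt, Matrix.one_apply_ne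
            (by intro hc; have := congrArg Fin.val hc; simp at this; omega)]
  | cast p =>
      induction q using Fin.lastCases with
      | last =>
          rw [emb_apply_col_last _ p.isLt, Matrix.one_apply_ne
            (by intro hc; have := congrArg Fin.val hc; simp at this; omega)]
      | cast q =>
          rw [emb_apply_cast]
          by_cases hpq : p = q
          · subst hpq; rw [Matrix.one_apply_eq, Matrix.one_apply_eq]
          · rw [Matrix.one_apply_ne hpq, Matrix.one_apply_ne
              (by intro hc; exact hpq (Fin.castSucc_injective d hc))]

lemma emb_mul {d : ℕ} (A B : Matrix (Fin d) (Fin d) ℂ) :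
    emb (A * B) = emb A * emb B := by
  ext p q
  rw [Matrix.mul_apply, Fin.sum_univ_castSucc]
  induction p using Fin.lastCases with
  | last =>
      have h0 : ∀ s : Fin d, emb A (Fin.last d) (Fin.castSucc s) = 0 :=
        fun s => emb_apply_row_last A s.isLt
      simp only [h0, zero_mul, Finset.sum_const_zero, zero_add, emb_apply_last_last, one_mul]
      induction q using Fin.lastCases with
      | last => rw [emb_apply_last_last, emb_apply_last_last]
      | cast q => rw [emb_apply_row_last _ q.isLt, emb_apply_row_last _ q.isLt]
  | cast p =>
      induction q using Fin.lastCases with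
      | last =>
          rw [emb_apply_col_last _ p.isLt, emb_apply_col_last _ p.isLt, zero_mul, add_zero]
          have h0 : ∀ s : Fin d, emb B (Fin.castSucc s) (Fin.last d) = 0 :=
            fun s => emb_apply_col_last B s.isLt
          simp only [h0, mul_zero, Finset.sum_const_zero]
      | cast q =>
          rw [emb_apply_cast, emb_apply_col_last _ p.isLt, zero_mul, add_zero,
            Matrix.mul_apply]
          apply Finset.sum_congr rfl
          intro s _
          rw [emb_apply_cast, emb_apply_cast]

lemma emb_inj {d : ℕ} {A B : Matrix (Fin d) (Fin d) ℂ} (h : emb A = emb B) : A = B := by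
  ext p q
  have := congrFun (congrFun h (Fin.castSucc p)) (Fin.castSucc q)
  rwa [emb_apply_cast, emb_apply_cast] at this

lemma ejmat_emb (d j : ℕ) (hj : j < d) (w : ℂ) :
    ejmat (d + 1) j w = emb (ejmat d j w) := by
  ext p q
  induction p using Fin.lastCases with
  | last =>
      have hE : ¬ ((Fin.last d).val + 1 = j ∧ q.val + 1 = j + 1) := by
        rintro ⟨h1, h2⟩
        rw [Fin.val_last] at h1
        omega
      rw [ejmat, Matrix.add_apply, Matrix.of_apply, if_neg hE, add_zero]
      induction q using Fin.lastCases with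
      | last => rw [emb_apply_last_last, Matrix.one_apply_eq]
      | cast q =>
          rw [emb_apply_row_last _ q.isLt, Matrix.one_apply_ne
            (by intro hc; have := congrArg Fin.val hc; simp at this; omega)]
  | cast p =>
      induction q using Fin.lastCases with
      | last =>
          have hE : ¬ ((Fin.castSucc p).val + 1 = j ∧ (Fin.last d).val + 1 = j + 1) := by
            rintro ⟨h1, h2⟩
            rw [Fin.val_last] at h2
            omega
          rw [ejmat, Matrix.add_apply, Matrix.of_apply, if_neg hE, add_zero,
            emb_apply_col_last _ p.isLt, Matrix.one_apply_ne
            (by intro hc; have := congrArg Fin.val hc; simp at this; omega)]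
      | cast q =>
          rw [emb_apply_cast]
          simp only [ejmat, Matrix.add_apply, Matrix.of_apply, Fin.coe_castSucc]
          congr 1
          by_cases hpq : p = q
          · subst hpq; rw [Matrix.one_apply_eq, Matrix.one_apply_eq]
          · rw [Matrix.one_apply_ne (by intro hc; exact hpq (Fin.castSucc_injective d hc)),
              Matrix.one_apply_ne hpq]

lemma Pmat_emb (d : ℕ) (l : List (ℕ × ℂ)) (hl : ∀ a ∈ l, a.1 < d) :
    Pmat (d + 1) l = emb (Pmat d l) := by
  induction l with
  | nil => rw [Pmat_nil, Pmat_nil, emb_one]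
  | cons a t ih =>
      rw [Pmat_cons, Pmat_cons, emb_mul,
        ejmat_emb d a.1 (hl a List.mem_cons_self) a.2,
        ih (fun b hb => hl b (List.mem_cons_of_mem a hb))]

end S11
namespace S11
open Matrix

lemma word_letters (n : ℕ) : ∀ j ∈ word n, 1 ≤ j ∧ j + 1 ≤ n := by
  intro j hj
  rw [word, List.mem_flatMap] at hj
  obtain ⟨r, hr, hj⟩ := hj
  rw [List.mem_reverse, List.mem_range] at hr
  rw [List.mem_map] at hj
  obtain ⟨s, hs, rfl⟩ := hj
  rw [List.mem_range] at hs
  omega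

lemma enum_range (d : ℕ) : (List.range d).zipIdx = (List.range d).map (fun i => (i, i)) := by
  induction d with
  | zero => rfl
  | succ e ih => rw [List.range_succ, List.zipIdx_append, List.map_append, ih]; simp

lemma word_succ (d : ℕ) : word (d + 1) = (List.range d).map (· + 1) ++ word d := by
  cases d with
  | zero => rfl
  | succ e =>
      rw [word, word]
      simp only [Nat.add_sub_cancel]
      rw [List.range_succ, List.reverse_append, List.reverse_cons, List.reverse_nil,
        List.nil_append, List.flatMap_append]
      simp [List.range_succ]

lemma word_length (n : ℕ) : 2 * (word n).length = n * (n - 1) := by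
  induction n with
  | zero => rfl
  | succ d ih =>
      rw [word_succ, List.length_append, List.length_map, List.length_range]
      cases d with
      | zero => rfl
      | succ e =>
          rw [Nat.mul_add, ih]
          simp only [Nat.add_sub_cancel]
          ring

/-- The unipotent part of `az0`. -/
def Nun (n : ℕ) (z : ℕ → ℂ) : Matrix (Fin n) (Fin n) ℂ :=
  Pmat n ((word n).zipIdx.map fun q => (q.1, z (q.2 + 1)))

lemma az0_eq (n : ℕ) (x z : ℕ → ℂ) :
    az0 n x z = Matrix.diagonal (fun p : Fin n => x (p.val + 1)) * Nun n z := by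
  rw [az0, Nun, Pmat, List.map_map]
  rfl

lemma UT_Nun (n : ℕ) (z : ℕ → ℂ) : UT (Nun n z) := UT_Pmat n _

/-- Structure lemma: `Nun (d+1) z = Pmat (FB d z) * emb (Nun d (shift z))`. -/
lemma Nun_struct (d : ℕ) (z : ℕ → ℂ) :
    Nun (d + 1) z = Pmat (d + 1) (FB d z) * emb (Nun d (fun j => z (j + d))) := by
  rw [Nun, word_succ, List.zipIdx_append, List.map_append, Pmat_append]
  have hlen : ((List.range d).map (· + 1)).length = d := by
    rw [List.length_map, List.length_range]
  congr 1
  · -- first block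
    have h1 : ((List.range d).map (· + 1)).zipIdx.map (fun q : ℕ × ℕ => (q.1, z (q.2 + 1)))
        = FB d z := by
      rw [List.zipIdx_map, enum_range, List.map_map, List.map_map, FB]
      rfl
    rw [h1]
  · -- remaining word
    have hL : ((word d).zipIdx (0 + ((List.range d).map (· + 1)).length)).map
          (fun q : ℕ × ℕ => (q.1, z (q.2 + 1)))
        = (word d).zipIdx.map (fun q : ℕ × ℕ => (q.1, z (q.2 + 1 + d))) := by
      rw [hlen, Nat.zero_add, List.zipIdx_eq_map_add (i := d), List.map_map]
      apply List.map_congr_left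
      rintro ⟨j, i⟩ _
      show (j, z (d + i + 1)) = (j, z (i + 1 + d))
      congr 2
      omega
    rw [hL, Nun, Pmat_emb]
    intro a ha
    rw [List.mem_map] at ha
    obtain ⟨c, hc, rfl⟩ := ha
    have h3 : c.1 ∈ word d := by
      rw [← List.zipIdx_map_fst 0 (word d)]
      exact List.mem_map.mpr ⟨c, hc, rfl⟩
    have := word_letters d c.1 h3
    omega

end S11
namespace S11
open Matrix

lemma cornerMinor_one (n k : ℕ) (hk1 : 1 ≤ k) (hk : k ≤ n)
    (N : Matrix (Fin n) (Fin n) ℂ) :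
    cornerMinor n k 1 N = N ⟨n - k, by omega⟩ ⟨n - 1, by omega⟩ := by
  rw [cornerMinor, dif_pos (⟨le_refl 1, hk1, hk⟩ : 1 ≤ 1 ∧ 1 ≤ k ∧ k ≤ n),
    Matrix.det_fin_one, Matrix.of_apply]
  congr 1 <;> exact Fin.ext (by simp)

lemma cornerMinor_rec (d k i : ℕ) (hi : 2 ≤ i) (hik : i ≤ k) (hk : k ≤ d + 1)
    (z : ℕ → ℂ) (B : Matrix (Fin d) (Fin d) ℂ) (N : Matrix (Fin (d + 1)) (Fin (d + 1)) ℂ)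
    (hN : ∀ p q : Fin (d + 1), N p q = emb B p q +
      if h : p.val < d then z (p.val + 1) * N ⟨p.val + 1, by omega⟩ q else 0) :
    cornerMinor (d + 1) k i N
      = N ⟨d + 1 - k + i - 1, by omega⟩ ⟨d, by omega⟩ * cornerMinor d (k - 1) (i - 1) B := by
  obtain ⟨j, rfl⟩ : ∃ j, i = j + 1 := ⟨i - 1, by omega⟩
  have hj1 : 1 ≤ j := by omega
  have hjd : j ≤ d := by omega
  have hrj : d + 1 - k + j ≤ d := by omega
  -- the family of row-reduced matrices
  have rowpf : ∀ a : Fin (j + 1), d + 1 - k + a.val < d + 1 := by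
    intro a; have := a.isLt; omega
  have colpf : ∀ b : Fin (j + 1), d + 1 - (j + 1) + b.val < d + 1 := by
    intro b; have := b.isLt; omega
  set C : ℕ → Matrix (Fin (j + 1)) (Fin (j + 1)) ℂ := fun s => Matrix.of fun a b =>
    if a.val < s then emb B ⟨d + 1 - k + a.val, rowpf a⟩ ⟨d + 1 - (j + 1) + b.val, colpf b⟩
    else N ⟨d + 1 - k + a.val, rowpf a⟩ ⟨d + 1 - (j + 1) + b.val, colpf b⟩ with hC
  have step : ∀ s, s < j → (C (s + 1)).det = (C s).det := by
    intro s hs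
    have hCs : C s = (C (s + 1)).updateRow ⟨s, by omega⟩
        ((C (s + 1)) ⟨s, by omega⟩ + z (d + 1 - k + s + 1) • (C (s + 1)) ⟨s + 1, by omega⟩) := by
      ext a b
      by_cases has : a = (⟨s, by omega⟩ : Fin (j + 1))
      · subst has
        rw [Matrix.updateRow_self]
        simp only [hC, Matrix.of_apply, Pi.add_apply, Pi.smul_apply, smul_eq_mul]
        rw [if_neg (by (try simp only [Fin.val_mk]); omega),
          if_pos (by (try simp only [Fin.val_mk]); omega),
          if_neg (by (try simp only [Fin.val_mk]); omega)]
        rw [hN ⟨d + 1 - k + s, by omega⟩ ⟨d + 1 - (j + 1) + b.val, colpf b⟩]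
        rw [dif_pos (by (try simp only [Fin.val_mk]); omega)]
        congr 2
        all_goals first
          | rfl
          | (exact Fin.ext (by (try simp only [Fin.val_mk]); omega))
          | ((try simp only [Fin.val_mk]); omega)
      · rw [Matrix.updateRow_ne has]
        simp only [hC, Matrix.of_apply]
        have hval : a.val ≠ s := fun hc => has (Fin.ext hc)
        by_cases h2 : a.val < s
        · rw [if_pos h2, if_pos (by omega)]
        · rw [if_neg h2, if_neg (by omega)]
    rw [hCs, Matrix.det_updateRow_add_smul_self _
      (by intro hc; have := congrArg Fin.val hc; simp only [Fin.val_mk] at this; omega) _]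
  have chain : ∀ s, s ≤ j → (C s).det = (C 0).det := by
    intro s
    induction s with
    | zero => intro _; rfl
    | succ t ih => intro hs; rw [step t (by omega), ih (by omega)]
  -- identify C 0 with the corner minor matrix
  rw [cornerMinor, dif_pos (⟨by omega, hik, hk⟩ : 1 ≤ j + 1 ∧ j + 1 ≤ k ∧ k ≤ d + 1)]
  have h0 : (Matrix.of fun p q : Fin (j + 1) =>
      N ⟨d + 1 - k + p.val, by have := p.isLt; omega⟩
        ⟨d + 1 - (j + 1) + q.val, by have := q.isLt; omega⟩) = C 0 := by
    ext a b
    simp only [hC, Matrix.of_apply]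
    rw [if_neg (by omega)]
  rw [h0, ← chain j (le_refl j)]
  -- block decomposition of C j
  set B' : Matrix (Fin j) (Fin j) ℂ := Matrix.of fun a b =>
    B ⟨d + 1 - k + a.val, by have := a.isLt; omega⟩
      ⟨d - j + b.val, by have := b.isLt; omega⟩ with hB'
  set cr : Matrix (Fin 1) (Fin j) ℂ := Matrix.of fun _ b =>
    N ⟨d + 1 - k + j, by omega⟩ ⟨d + 1 - (j + 1) + b.val, by have := b.isLt; omega⟩ with hcr
  set w : Matrix (Fin 1) (Fin 1) ℂ := Matrix.of fun _ _ =>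
    N ⟨d + 1 - k + j, by omega⟩ ⟨d, by omega⟩ with hw
  have hD : C j = (Matrix.fromBlocks B' 0 cr w).submatrix
      (finSumFinEquiv.symm : Fin (j + 1) ≃ Fin j ⊕ Fin 1)
      (finSumFinEquiv.symm : Fin (j + 1) ≃ Fin j ⊕ Fin 1) := by
    ext a b
    rw [Matrix.submatrix_apply]
    induction a using Fin.lastCases with
    | last =>
        have ha : finSumFinEquiv.symm (Fin.last j) = Sum.inr (0 : Fin 1) := by
          rw [show Fin.last j = Fin.natAdd j (0 : Fin 1) from Fin.ext (by simp),
            finSumFinEquiv_symm_apply_natAdd]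
        rw [ha]
        induction b using Fin.lastCases with
        | last =>
            have hb : finSumFinEquiv.symm (Fin.last j) = Sum.inr (0 : Fin 1) := by
              rw [show Fin.last j = Fin.natAdd j (0 : Fin 1) from Fin.ext (by simp),
                finSumFinEquiv_symm_apply_natAdd]
            rw [hb]
            simp only [hC, Matrix.of_apply, Matrix.fromBlocks_apply₂₂, hw]
            rw [if_neg (by simp only [Fin.val_last]; omega)]
            congr 1 <;> exact Fin.ext (by simp only [Fin.val_last, Fin.val_mk]; omega)
        | cast b =>
            have hb : finSumFinEquiv.symm (Fin.castSucc b) = Sum.inl b := by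
              rw [show Fin.castSucc b = Fin.castAdd 1 b from rfl,
                finSumFinEquiv_symm_apply_castAdd]
            rw [hb]
            simp only [hC, Matrix.of_apply, Matrix.fromBlocks_apply₂₁, hcr]
            rw [if_neg (by (try simp only [Fin.val_last]); omega)]
            congr 1 <;> exact Fin.ext (by (try simp only [Fin.val_last, Fin.val_mk]); omega)
    | cast a =>
        have ha : finSumFinEquiv.symm (Fin.castSucc a) = Sum.inl a := by
          rw [show Fin.castSucc a = Fin.castAdd 1 a from rfl,
            finSumFinEquiv_symm_apply_castAdd]
        rw [ha]
        induction b using Fin.lastCases with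
        | last =>
            have hb : finSumFinEquiv.symm (Fin.last j) = Sum.inr (0 : Fin 1) := by
              rw [show Fin.last j = Fin.natAdd j (0 : Fin 1) from Fin.ext (by simp),
                finSumFinEquiv_symm_apply_natAdd]
            rw [hb]
            simp only [hC, Matrix.of_apply, Matrix.fromBlocks_apply₁₂, Matrix.zero_apply]
            rw [if_pos (by simp only [Fin.coe_castSucc]; exact a.isLt)]
            have : (⟨d + 1 - (j + 1) + (Fin.last j).val, colpf (Fin.last j)⟩ : Fin (d + 1))
                = Fin.last d := Fin.ext (by simp only [Fin.val_last, Fin.val_mk]; omega)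
            rw [this]
            exact emb_apply_col_last B (by simp only [Fin.val_mk, Fin.coe_castSucc]; have := a.isLt; omega)
        | cast b =>
            have hb : finSumFinEquiv.symm (Fin.castSucc b) = Sum.inl b := by
              rw [show Fin.castSucc b = Fin.castAdd 1 b from rfl,
                finSumFinEquiv_symm_apply_castAdd]
            rw [hb]
            simp only [hC, Matrix.of_apply, Matrix.fromBlocks_apply₁₁, hB']
            rw [if_pos (by simp only [Fin.coe_castSucc]; exact a.isLt)]
            rw [emb_apply_lt B (by simp only [Fin.val_mk, Fin.coe_castSucc]; have := a.isLt; omega)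
              (by simp only [Fin.val_mk, Fin.coe_castSucc]; have := b.isLt; omega)]
            simp only [Matrix.of_apply]
            congr 1 <;> exact Fin.ext (by simp only [Fin.val_mk, Fin.coe_castSucc]; omega)
  rw [hD, Matrix.det_submatrix_equiv_self, Matrix.det_fromBlocks_zero₁₂,
    Matrix.det_fin_one]
  have hwv : w 0 0 = N ⟨d + 1 - k + (j + 1) - 1, by omega⟩ ⟨d, by omega⟩ := by
    show N _ _ = N _ _
    congr 1 <;> exact Fin.ext (by (try simp only [Fin.val_mk]); omega)
  have hBv : B'.det = cornerMinor d (k - 1) (j + 1 - 1) B := by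
    rw [cornerMinor, dif_pos (⟨by omega, by omega, by omega⟩ : 1 ≤ j + 1 - 1 ∧ j + 1 - 1 ≤ k - 1 ∧ k - 1 ≤ d)]
    congr 1
    ext a b
    show B _ _ = B _ _
    congr 1 <;> exact Fin.ext (by (try simp only [Fin.val_mk]); omega)
  rw [hwv, hBv, mul_comm]

end S11
namespace S11
open Matrix

def GoodZ (n : ℕ) (z : ℕ → ℂ) : Prop :=
  ∀ j : ℕ, 1 ≤ j → j ≤ (word n).length → z j ≠ 0

lemma length_word_succ (d : ℕ) : (word (d + 1)).length = d + (word d).length := by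
  rw [word_succ, List.length_append, List.length_map, List.length_range]

/-- Column recurrence for a matrix satisfying the row recurrence. -/
lemma col_rec {d : ℕ} {z : ℕ → ℂ} {B : Matrix (Fin d) (Fin d) ℂ}
    {N : Matrix (Fin (d + 1)) (Fin (d + 1)) ℂ}
    (hrec : ∀ p q : Fin (d + 1), N p q = emb B p q +
      if h : p.val < d then z (p.val + 1) * N ⟨p.val + 1, by omega⟩ q else 0)
    (p : Fin (d + 1)) (hp : p.val < d) :
    N p (Fin.last d) = z (p.val + 1) * N ⟨p.val + 1, by omega⟩ (Fin.last d) := by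
  rw [hrec p (Fin.last d), dif_pos hp, emb_apply_col_last B hp, zero_add]

lemma col_ne {d : ℕ} {z : ℕ → ℂ} {B : Matrix (Fin d) (Fin d) ℂ}
    {N : Matrix (Fin (d + 1)) (Fin (d + 1)) ℂ}
    (hrec : ∀ p q : Fin (d + 1), N p q = emb B p q +
      if h : p.val < d then z (p.val + 1) * N ⟨p.val + 1, by omega⟩ q else 0)
    (hlast : N (Fin.last d) (Fin.last d) = 1)
    (hz : ∀ t : ℕ, 1 ≤ t → t ≤ d → z t ≠ 0) :
    ∀ p : Fin (d + 1), N p (Fin.last d) ≠ 0 := by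
  suffices h : ∀ t : ℕ, ∀ p : Fin (d + 1), d ≤ p.val + t → N p (Fin.last d) ≠ 0 from
    fun p => h d p (by omega)
  intro t
  induction t with
  | zero =>
      intro p hp
      have hpl : p = Fin.last d := Fin.ext (by have := p.isLt; simp only [Fin.val_last]; omega)
      rw [hpl, hlast]
      exact one_ne_zero
  | succ t ih =>
      intro p hp
      by_cases hpd : p.val < d
      · rw [col_rec hrec p hpd]
        exact mul_ne_zero (hz (p.val + 1) (by omega) (by omega))
          (ih ⟨p.val + 1, by omega⟩ (by simp only [Fin.val_mk]; omega))
      · have hpl : p = Fin.last d := Fin.ext (by have := p.isLt; simp only [Fin.val_last]; omega)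
        rw [hpl, hlast]
        exact one_ne_zero

theorem main (d : ℕ) :
    (∀ z : ℕ → ℂ, GoodZ d z → ∀ i k : ℕ, 1 ≤ i → i < k → k ≤ d →
        cornerMinor d k i (Nun d z) ≠ 0) ∧
    (∀ z z' : ℕ → ℂ, GoodZ d z → GoodZ d z' → Nun d z = Nun d z' →
        ∀ j : ℕ, 1 ≤ j → j ≤ (word d).length → z j = z' j) ∧
    (∀ N : Matrix (Fin d) (Fin d) ℂ, UT N →
        (∀ i k : ℕ, 1 ≤ i → i < k → k ≤ d → cornerMinor d k i N ≠ 0) →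
        ∃ z : ℕ → ℂ, GoodZ d z ∧ N = Nun d z) := by
  induction d with
  | zero =>
      refine ⟨fun z hz i k h1 h2 h3 => absurd h3 (by omega), fun z z' _ _ _ j h1 h2 => ?_,
        fun N _ _ => ⟨fun _ => 1, fun j h1 h2 => one_ne_zero, ?_⟩⟩
      · have : (word 0).length = 0 := rfl
        omega
      · ext p q
        exact absurd p.isLt (by omega)
  | succ d ih =>
      obtain ⟨ihA, ihU, ihE⟩ := ih
      have hlen := length_word_succ d
      refine ⟨?_, ?_, ?_⟩
      · -- corner minors of Nun (d+1) z are nonzero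
        intro z hz i k h1 hik hk
        set B := Nun d (fun j => z (j + d)) with hB
        have hrec := (FB_char (d + 1) d (by omega) z (emb B) (Nun (d + 1) z)).mp
          (Nun_struct d z)
        have hzfb : ∀ t : ℕ, 1 ≤ t → t ≤ d → z t ≠ 0 := fun t h1 h2 =>
          hz t h1 (by omega)
        have hcol := col_ne hrec ((UT_Nun (d + 1) z).2 (Fin.last d)) hzfb
        by_cases hi1 : i = 1
        · subst hi1
          rw [cornerMinor_one (d + 1) k (by omega) hk]
          have heq : (⟨d + 1 - 1, by omega⟩ : Fin (d + 1)) = Fin.last d :=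
            Fin.ext (by simp only [Fin.val_last, Fin.val_mk]; omega)
          rw [heq]
          exact hcol _
        · rw [cornerMinor_rec d k i (by omega) (by omega) hk z B (Nun (d + 1) z) hrec]
          refine mul_ne_zero ?_ ?_
          · exact hcol ⟨d + 1 - k + i - 1, by omega⟩
          · refine ihA (fun j => z (j + d)) ?_ (i - 1) (k - 1) (by omega) (by omega) (by omega)
            intro j hj1 hj2
            exact hz (j + d) (by omega) (by omega)
      · -- uniqueness
        intro z z' hz hz' heq j hj1 hj2
        set B := Nun d (fun j => z (j + d)) with hB
        set B' := Nun d (fun j => z' (j + d)) with hB'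
        set N := Nun (d + 1) z with hNdef
        have hrec := (FB_char (d + 1) d (by omega) z (emb B) N).mp (Nun_struct d z)
        have hrec' : ∀ p q : Fin (d + 1), N p q = emb B' p q +
            if h : p.val < d then z' (p.val + 1) * N ⟨p.val + 1, by omega⟩ q else 0 := by
          have h0 := (FB_char (d + 1) d (by omega) z' (emb B') (Nun (d + 1) z')).mp
            (Nun_struct d z')
          rw [heq]
          exact h0
        have hzfb : ∀ t : ℕ, 1 ≤ t → t ≤ d → z t ≠ 0 := fun t h1 h2 => hz t h1 (by omega)
        have hcol := col_ne hrec ((UT_Nun (d + 1) z).2 (Fin.last d)) hzfb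
        have hfb : ∀ t : ℕ, 1 ≤ t → t ≤ d → z t = z' t := by
          intro t h1 h2
          have e1 := col_rec hrec ⟨t - 1, by omega⟩ (by simp only [Fin.val_mk]; omega)
          have e2 := col_rec hrec' ⟨t - 1, by omega⟩ (by simp only [Fin.val_mk]; omega)
          have e4 := e1.symm.trans e2
          have e5 := mul_right_cancel₀ (hcol _) e4
          have ht : (⟨t - 1, by omega⟩ : Fin (d + 1)).val + 1 = t := by
            simp only [Fin.val_mk]; omega
          rwa [ht] at e5
        -- first block lists agree, so the embedded parts agree
        have hembeq : ∀ p q : Fin (d + 1), emb B p q = emb B' p q := by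
          intro p q
          have e1 := hrec p q
          have e2 := hrec' p q
          by_cases hpd : p.val < d
          · rw [dif_pos hpd] at e1 e2
            rw [hfb (p.val + 1) (by omega) (by omega)] at e1
            have := e1.symm.trans e2
            exact add_right_cancel this
          · rw [dif_neg hpd, add_zero] at e1 e2
            rw [← e1, ← e2]
        have hBB : B = B' := emb_inj (by ext p q; exact hembeq p q)
        have hshift : GoodZ d (fun j => z (j + d)) := fun j h1 h2 => hz (j + d) (by omega)
          (by omega)
        have hshift' : GoodZ d (fun j => z' (j + d)) := fun j h1 h2 => hz' (j + d) (by omega)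
          (by omega)
        have htail := ihU (fun j => z (j + d)) (fun j => z' (j + d)) hshift hshift' hBB
        by_cases hjd : j ≤ d
        · exact hfb j hj1 hjd
        · have h2 : z (j - d + d) = z' (j - d + d) := htail (j - d) (by omega) (by omega)
          have hjj : j - d + d = j := by omega
          rwa [hjj] at h2
      · -- existence
        intro N hUT hmin
        have hcolne : ∀ p : Fin (d + 1), N p (Fin.last d) ≠ 0 := by
          intro p
          by_cases hpd : p.val < d
          · have hm1 := hmin 1 (d + 1 - p.val) (le_refl 1) (by omega) (by omega)
            rw [cornerMinor_one (d + 1) (d + 1 - p.val) (by omega) (by omega)] at hm1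
            have e1 : (⟨d + 1 - (d + 1 - p.val), by omega⟩ : Fin (d + 1)) = p :=
              Fin.ext (by simp only [Fin.val_mk]; omega)
            have e2 : (⟨d + 1 - 1, by omega⟩ : Fin (d + 1)) = Fin.last d :=
              Fin.ext (by simp only [Fin.val_mk, Fin.val_last]; omega)
            rwa [e1, e2] at hm1
          · have hpl : p = Fin.last d :=
              Fin.ext (by simp only [Fin.val_last]; have := p.isLt; omega)
            rw [hpl, hUT.2 (Fin.last d)]
            exact one_ne_zero
        set zFB : ℕ → ℂ := (fun t => if h : 1 ≤ t ∧ t ≤ d then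
          N ⟨t - 1, by omega⟩ (Fin.last d) / N ⟨t, by omega⟩ (Fin.last d) else 1) with hzFBdef
        have hzFBne : ∀ t : ℕ, 1 ≤ t → t ≤ d → zFB t ≠ 0 := by
          intro t h1 h2
          simp only [hzFBdef]
          rw [dif_pos ⟨h1, h2⟩]
          exact div_ne_zero (hcolne _) (hcolne _)
        have hcolrec : ∀ p : Fin (d + 1), ∀ _ : p.val < d,
            N p (Fin.last d) = zFB (p.val + 1) * N ⟨p.val + 1, by omega⟩ (Fin.last d) := by
          intro p hp
          simp only [hzFBdef]
          rw [dif_pos ⟨by omega, by omega⟩, div_mul_cancel₀ _ (hcolne _)]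
          congr 1
          all_goals first
            | rfl
            | (exact Fin.ext (by (try simp only [Fin.val_mk]); omega))
        set M : Matrix (Fin (d + 1)) (Fin (d + 1)) ℂ := (Matrix.of fun p q =>
          N p q - (if h : p.val < d then zFB (p.val + 1) * N ⟨p.val + 1, by omega⟩ q else 0))
          with hMdef
        have hNM : ∀ p q : Fin (d + 1), N p q = M p q +
            if h : p.val < d then zFB (p.val + 1) * N ⟨p.val + 1, by omega⟩ q else 0 := by
          intro p q
          rw [hMdef]
          simp only [Matrix.of_apply]
          ring
        set B : Matrix (Fin d) (Fin d) ℂ := (Matrix.of fun p q =>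
          M ⟨p.val, by omega⟩ ⟨q.val, by omega⟩) with hBdef
        have hMB : M = emb B := by
          ext p q
          induction p using Fin.lastCases with
          | last =>
              have hM : M (Fin.last d) q = N (Fin.last d) q := by
                rw [hMdef]
                simp only [Matrix.of_apply]
                rw [dif_neg (by simp only [Fin.val_last]; omega)]
                ring
              rw [hM]
              induction q using Fin.lastCases with
              | last => rw [emb_apply_last_last, hUT.2]
              | cast q =>
                  rw [emb_apply_row_last _ q.isLt]
                  exact hUT.1 (Fin.last d) (Fin.castSucc q)
                    (by simp only [Fin.val_last, Fin.coe_castSucc]; exact q.isLt)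
          | cast p =>
              induction q using Fin.lastCases with
              | last =>
                  rw [emb_apply_col_last _ (by simp only [Fin.coe_castSucc]; exact p.isLt)]
                  rw [hMdef]
                  simp only [Matrix.of_apply]
                  rw [dif_pos (by simp only [Fin.coe_castSucc]; exact p.isLt)]
                  rw [sub_eq_zero]
                  exact hcolrec (Fin.castSucc p) (by simp only [Fin.coe_castSucc]; exact p.isLt)
              | cast q =>
                  rw [emb_apply_cast, hBdef]
                  simp only [Matrix.of_apply]
                  congr 1 <;> exact Fin.ext (by simp only [Fin.val_mk, Fin.coe_castSucc])
        have hrec : ∀ p q : Fin (d + 1), N p q = emb B p q +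
            if h : p.val < d then zFB (p.val + 1) * N ⟨p.val + 1, by omega⟩ q else 0 := by
          intro p q
          rw [← hMB]
          exact hNM p q
        have hUTB : UT B := by
          constructor
          · intro p q hqp
            rw [hBdef]
            simp only [Matrix.of_apply]
            rw [hMdef]
            simp only [Matrix.of_apply]
            rw [dif_pos (by have := p.isLt; (try simp only [Fin.val_mk]); omega)]
            rw [hUT.1 _ _ (by simp only [Fin.val_mk]; omega),
              hUT.1 _ _ (by simp only [Fin.val_mk]; omega)]
            ring
          · intro p
            rw [hBdef]
            simp only [Matrix.of_apply]
            rw [hMdef]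
            simp only [Matrix.of_apply]
            rw [dif_pos (by have := p.isLt; (try simp only [Fin.val_mk]); omega)]
            rw [hUT.2 ⟨p.val, by omega⟩, hUT.1 _ _ (by simp only [Fin.val_mk]; omega)]
            ring
        have hminB : ∀ i k : ℕ, 1 ≤ i → i < k → k ≤ d → cornerMinor d k i B ≠ 0 := by
          intro i k h1 hik hk
          have hrec2 := cornerMinor_rec d (k + 1) (i + 1) (by omega) (by omega) (by omega)
            zFB B N hrec
          have hne := hmin (i + 1) (k + 1) (by omega) (by omega) (by omega)
          rw [hrec2] at hne
          have := (mul_ne_zero_iff.mp hne).2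
          have hkk : k + 1 - 1 = k := by omega
          have hii : i + 1 - 1 = i := by omega
          rwa [hkk, hii] at this
        obtain ⟨z', hz', hBz'⟩ := ihE B hUTB hminB
        refine ⟨fun j => if j ≤ d then zFB j else z' (j - d), ?_, ?_⟩
        · intro j hj1 hj2
          by_cases hjd : j ≤ d
          · simpa only [if_pos hjd] using hzFBne j hj1 hjd
          · simpa only [if_neg hjd] using hz' (j - d) (by omega) (by omega)
        · rw [Nun_struct d _]
          have hFBeq : FB d (fun j => if j ≤ d then zFB j else z' (j - d)) = FB d zFB := by
            rw [FB, FB]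
            apply List.map_congr_left
            intro t ht
            rw [List.mem_range] at ht
            rw [if_pos (by omega)]
          have hNuneq : Nun d (fun j => (if j + d ≤ d then zFB (j + d) else z' (j + d - d)))
              = Nun d z' := by
            rw [Nun, Nun]
            refine congrArg (Pmat d) ?_
            apply List.map_congr_left
            rintro ⟨a1, a2⟩ ha
            simp only [Prod.mk.injEq]
            refine ⟨trivial, ?_⟩
            rw [if_neg (by omega)]
            congr 1
            omega
          rw [hFBeq, hNuneq, ← hBz', ← hMB]
          exact (FB_char (d + 1) d (by omega) zFB M N).mpr hNM

end S11
namespace S11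
open Matrix

lemma cornerMinor_diag (n k i : ℕ) (h1 : 1 ≤ i) (hik : i ≤ k) (hk : k ≤ n)
    (v : Fin n → ℂ) (N : Matrix (Fin n) (Fin n) ℂ) :
    cornerMinor n k i (Matrix.diagonal v * N)
      = (∏ a : Fin i, v ⟨n - k + a.val, by have := a.isLt; omega⟩) * cornerMinor n k i N := by
  rw [cornerMinor, cornerMinor, dif_pos (⟨h1, hik, hk⟩ : 1 ≤ i ∧ i ≤ k ∧ k ≤ n),
    dif_pos (⟨h1, hik, hk⟩ : 1 ≤ i ∧ i ≤ k ∧ k ≤ n),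
    ← Matrix.det_mul_column (fun a : Fin i => v ⟨n - k + a.val, by have := a.isLt; omega⟩)]
  congr 1
  ext p q
  simp only [Matrix.of_apply]
  rw [Matrix.diagonal_mul]

end S11

theorem statement_11' (n m : ℕ) (hn : 2 ≤ n) (hm : m = n * (n - 1) / 2) :
    (∀ x x' z z' : ℕ → ℂ,
      (∀ j : ℕ, 1 ≤ j → j ≤ n → 0 < (x j).re ∧ (x j).im = 0) →
      (∀ j : ℕ, 1 ≤ j → j ≤ n → 0 < (x' j).re ∧ (x' j).im = 0) →
      (∀ j : ℕ, 1 ≤ j → j ≤ m → z j ≠ 0) →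
      (∀ j : ℕ, 1 ≤ j → j ≤ m → z' j ≠ 0) →
      az0 n x z = az0 n x' z' →
      (∀ j : ℕ, 1 ≤ j → j ≤ n → x j = x' j) ∧ (∀ j : ℕ, 1 ≤ j → j ≤ m → z j = z' j)) ∧
    (∀ b : Matrix (Fin n) (Fin n) ℂ,
      (b ∈ AN n ∧ ∀ i k : ℕ, 1 ≤ i → i < k → k ≤ n → cornerMinor n k i b ≠ 0) ↔
      (∃ x z : ℕ → ℂ,
        (∀ j : ℕ, 1 ≤ j → j ≤ n → 0 < (x j).re ∧ (x j).im = 0) ∧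
        (∀ j : ℕ, 1 ≤ j → j ≤ m → z j ≠ 0) ∧
        b = az0 n x z)) := by
  obtain ⟨mainA, mainU, mainE⟩ := S11.main n
  have hmlen : m = (word n).length := by
    have := S11.word_length n
    omega
  constructor
  · intro x x' z z' hx hx' hz hz' heq
    have hGz : S11.GoodZ n z := fun j h1 h2 => hz j h1 (by omega)
    have hGz' : S11.GoodZ n z' := fun j h1 h2 => hz' j h1 (by omega)
    rw [S11.az0_eq, S11.az0_eq] at heq
    have hdiag : ∀ p : Fin n, x (p.val + 1) = x' (p.val + 1) := by
      intro p
      have h1 := congrFun (congrFun heq p) p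
      rw [Matrix.diagonal_mul, Matrix.diagonal_mul, (S11.UT_Nun n z).2 p,
        (S11.UT_Nun n z').2 p, mul_one, mul_one] at h1
      exact h1
    have hxeq : ∀ j : ℕ, 1 ≤ j → j ≤ n → x j = x' j := by
      intro j h1 h2
      have h3 := hdiag ⟨j - 1, by omega⟩
      have hj : (⟨j - 1, by omega⟩ : Fin n).val + 1 = j := by
        simp only [Fin.val_mk]; omega
      rwa [hj] at h3
    refine ⟨hxeq, ?_⟩
    have hNeq : S11.Nun n z = S11.Nun n z' := by
      ext p q
      have h1 := congrFun (congrFun heq p) q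
      rw [Matrix.diagonal_mul, Matrix.diagonal_mul, hdiag p] at h1
      have hne : x' (p.val + 1) ≠ 0 := by
        have hp := (hx' (p.val + 1) (by omega) (by have := p.isLt; omega)).1
        intro h0
        rw [h0] at hp
        simp at hp
      exact mul_left_cancel₀ hne h1
    intro j h1 h2
    exact mainU z z' hGz hGz' hNeq j h1 (by omega)
  · intro b
    constructor
    · rintro ⟨hAN, hmin⟩
      obtain ⟨hlow, hdiag⟩ := hAN
      set x : ℕ → ℂ := (fun j => if h : 1 ≤ j ∧ j ≤ n then
        b ⟨j - 1, by omega⟩ ⟨j - 1, by omega⟩ else 1) with hxdef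
      have hxv : ∀ p : Fin n, x (p.val + 1) = b p p := by
        intro p
        simp only [hxdef]
        rw [dif_pos ⟨by omega, by have := p.isLt; omega⟩]
        have e : (⟨p.val + 1 - 1, by have := p.isLt; omega⟩ : Fin n) = p :=
          Fin.ext (by simp only [Fin.val_mk]; omega)
        rw [e]
      have hbne : ∀ p : Fin n, b p p ≠ 0 := by
        intro p h0
        have h2 := (hdiag p).1
        rw [h0] at h2
        simp at h2
      have hxp : ∀ j : ℕ, 1 ≤ j → j ≤ n → 0 < (x j).re ∧ (x j).im = 0 := by
        intro j h1 h2
        simp only [hxdef]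
        rw [dif_pos ⟨h1, h2⟩]
        exact hdiag _
      set N : Matrix (Fin n) (Fin n) ℂ :=
        (Matrix.of fun p q => (x (p.val + 1))⁻¹ * b p q) with hNdef
      have hxne : ∀ p : Fin n, x (p.val + 1) ≠ 0 := fun p => by
        rw [hxv p]; exact hbne p
      have hbN : b = Matrix.diagonal (fun p : Fin n => x (p.val + 1)) * N := by
        ext p q
        rw [Matrix.diagonal_mul, hNdef]
        simp only [Matrix.of_apply]
        rw [mul_inv_cancel_left₀ (hxne p)]
      have hUTN : S11.UT N := by
        constructor
        · intro p q hqp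
          rw [hNdef]
          simp only [Matrix.of_apply]
          rw [hlow p q hqp, mul_zero]
        · intro p
          rw [hNdef]
          simp only [Matrix.of_apply]
          rw [← hxv p, inv_mul_cancel₀ (hxne p)]
      have hminN : ∀ i k : ℕ, 1 ≤ i → i < k → k ≤ n → cornerMinor n k i N ≠ 0 := by
        intro i k h1 hik hk
        have h2 := hmin i k h1 hik hk
        rw [hbN, S11.cornerMinor_diag n k i h1 (by omega) hk] at h2
        exact (mul_ne_zero_iff.mp h2).2
      obtain ⟨z, hGz, hNz⟩ := mainE N hUTN hminN
      refine ⟨x, z, hxp, fun j h1 h2 => hGz j h1 (by omega), ?_⟩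
      rw [S11.az0_eq, ← hNz, ← hbN]
    · rintro ⟨x, z, hx, hz, rfl⟩
      have hGz : S11.GoodZ n z := fun j h1 h2 => hz j h1 (by omega)
      have hxne : ∀ j : ℕ, 1 ≤ j → j ≤ n → x j ≠ 0 := by
        intro j h1 h2 h0
        have h3 := (hx j h1 h2).1
        rw [h0] at h3
        simp at h3
      refine ⟨⟨?_, ?_⟩, ?_⟩
      · intro p q hqp
        rw [S11.az0_eq, Matrix.diagonal_mul, (S11.UT_Nun n z).1 p q hqp, mul_zero]
      · intro p
        rw [S11.az0_eq, Matrix.diagonal_mul, (S11.UT_Nun n z).2 p, mul_one]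
        exact hx (p.val + 1) (by omega) (by have := p.isLt; omega)
      · intro i k h1 hik hk
        rw [S11.az0_eq, S11.cornerMinor_diag n k i h1 (by omega) hk]
        refine mul_ne_zero ?_ (mainA z hGz i k h1 hik hk)
        refine Finset.prod_ne_zero_iff.mpr ?_
        intro a _
        exact hxne (n - k + a.val + 1) (by omega) (by have := a.isLt; omega)

/-- The map `(x,z) ↦ az_0(x,z)` is injective on
`(0,∞)^n × (ℂ∖{0})^m`, and its image is exactly the set of `b ∈ AN` whose corner
minors `Δ_i^{(k)}(b)`, `1 ≤ i < k ≤ n`, are all nonzero. -/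
theorem statement_11 (n m : ℕ) (hn : 2 ≤ n) (hm : m = n * (n - 1) / 2) :
    (∀ x x' z z' : ℕ → ℂ,
      (∀ j : ℕ, 1 ≤ j → j ≤ n → 0 < (x j).re ∧ (x j).im = 0) →
      (∀ j : ℕ, 1 ≤ j → j ≤ n → 0 < (x' j).re ∧ (x' j).im = 0) →
      (∀ j : ℕ, 1 ≤ j → j ≤ m → z j ≠ 0) →
      (∀ j : ℕ, 1 ≤ j → j ≤ m → z' j ≠ 0) →
      az0 n x z = az0 n x' z' →
      (∀ j : ℕ, 1 ≤ j → j ≤ n → x j = x' j) ∧ (∀ j : ℕ, 1 ≤ j → j ≤ m → z j = z' j)) ∧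
    (∀ b : Matrix (Fin n) (Fin n) ℂ,
      (b ∈ AN n ∧ ∀ i k : ℕ, 1 ≤ i → i < k → k ≤ n → cornerMinor n k i b ≠ 0) ↔
      (∃ x z : ℕ → ℂ,
        (∀ j : ℕ, 1 ≤ j → j ≤ n → 0 < (x j).re ∧ (x j).im = 0) ∧
        (∀ j : ℕ, 1 ≤ j → j ≤ m → z j ≠ 0) ∧
        b = az0 n x z)) := by
  exact statement_11' n m hn hm

end
end

section
/- Let b, b′ ∈ AN be two n×n upper triangular complex matrices with positive real diagonal entries such that Δ_i^{(k)}(b) ≠ 0 and Δ_i^{(k)}(b′) ≠ 0 for all 1 ≤ i < k ≤ n. If Δ_i^{(k)}(b) = Δ_i^{(k)}(b′) for all 1 ≤ i ≤ k ≤ n, then b = b′. In other words, the collection of corner minors is a coordinate chart on the open dense subset of AN where all corner minors are nonzero. -/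
open Matrix Finset Filter

noncomputable section

private lemma cornerMinor_eq_det (n k i : ℕ) (h1 : 1 ≤ i) (h2 : i ≤ k) (h3 : k ≤ n)
    (b : Matrix (Fin n) (Fin n) ℂ) :
    cornerMinor n k i b = Matrix.det (Matrix.of fun p q : Fin i =>
      b ⟨n - k + p.val, by have := p.isLt; omega⟩ ⟨n - i + q.val, by have := q.isLt; omega⟩) := by
  rw [cornerMinor, dif_pos ⟨h1, h2, h3⟩]

private lemma cornerMinor_diag_ne (n m : ℕ) (h1 : 1 ≤ m) (h3 : m ≤ n)
    {b : Matrix (Fin n) (Fin n) ℂ} (hb : b ∈ AN n) : cornerMinor n m m b ≠ 0 := by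
  rw [cornerMinor_eq_det n m m h1 le_rfl h3, Matrix.det_of_upperTriangular]
  · apply Finset.prod_ne_zero_iff.mpr
    intro p _
    have h := (hb.2 ⟨n - m + p.val, by have := p.isLt; omega⟩).1
    intro hz
    rw [Matrix.of_apply] at hz
    rw [hz] at h
    simp at h
  · intro p q hqp
    apply hb.1
    have hh : (q : ℕ) < (p : ℕ) := hqp
    simp only [Fin.lt_def]
    omega

/-- Cofactor expansion of a corner minor along its first row. -/
private lemma cornerMinor_expand (n k m : ℕ) (h2 : m + 1 ≤ k) (h3 : k ≤ n)
    (b : Matrix (Fin n) (Fin n) ℂ) :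
    cornerMinor n k (m+1) b = ∑ j : Fin (m+1),
      (-1 : ℂ) ^ (j : ℕ) * b ⟨n - k, by omega⟩ ⟨n - (m+1) + j.val, by have := j.isLt; omega⟩ *
        Matrix.det (Matrix.of fun p q : Fin m =>
          b ⟨n - k + 1 + p.val, by have := p.isLt; omega⟩
            ⟨n - (m+1) + (j.succAbove q).val, by have := (j.succAbove q).isLt; omega⟩) := by
  rw [cornerMinor_eq_det n k (m+1) (by omega) h2 h3, Matrix.det_succ_row_zero]
  apply Finset.sum_congr rfl
  intro j _
  have e1 : (Matrix.of fun p q : Fin (m+1) =>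
      b ⟨n - k + p.val, by have := p.isLt; omega⟩
        ⟨n - (m+1) + q.val, by have := q.isLt; omega⟩) 0 j
      = b ⟨n - k, by omega⟩ ⟨n - (m+1) + j.val, by have := j.isLt; omega⟩ := by
    simp only [Matrix.of_apply, Fin.val_zero, Nat.add_zero]
  have e2 : ((Matrix.of fun p q : Fin (m+1) =>
      b ⟨n - k + p.val, by have := p.isLt; omega⟩
        ⟨n - (m+1) + q.val, by have := q.isLt; omega⟩).submatrix Fin.succ j.succAbove)
      = (Matrix.of fun p q : Fin m =>
          b ⟨n - k + 1 + p.val, by have := p.isLt; omega⟩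
            ⟨n - (m+1) + (j.succAbove q).val, by have := (j.succAbove q).isLt; omega⟩) := by
    ext p q
    simp only [Matrix.submatrix_apply, Matrix.of_apply, Fin.val_succ]
    have hrow : (⟨n - k + (p.val + 1), by have := p.isLt; omega⟩ : Fin n)
        = ⟨n - k + 1 + p.val, by have := p.isLt; omega⟩ :=
      Fin.ext (show n - k + (p.val + 1) = n - k + 1 + p.val by omega)
    rw [hrow]
  rw [e1, e2]

/-- Two matrices in `AN` whose corner minors are all nonzero and
agree must be equal: the corner minors form a coordinate chart on the open dense
subset of `AN` where they do not vanish. -/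
theorem statement_12 (n : ℕ) (b b' : Matrix (Fin n) (Fin n) ℂ)
    (hb : b ∈ AN n) (hb' : b' ∈ AN n)
    (hnz : ∀ i k : ℕ, 1 ≤ i → i < k → k ≤ n → cornerMinor n k i b ≠ 0)
    (hnz' : ∀ i k : ℕ, 1 ≤ i → i < k → k ≤ n → cornerMinor n k i b' ≠ 0)
    (heq : ∀ i k : ℕ, 1 ≤ i → i ≤ k → k ≤ n → cornerMinor n k i b = cornerMinor n k i b') :
    b = b' := by
  have key : ∀ d : ℕ, ∀ r : Fin n, n - r.val ≤ d → ∀ c : Fin n, b r c = b' r c := by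
    intro d
    induction d with
    | zero => intro r hr; omega
    | succ d ih =>
      intro r hr c
      have Hrow : ∀ r' c' : Fin n, r.val < r'.val → b r' c' = b' r' c' := by
        intro r' c' h
        exact ih r' (by omega) c'
      set k := n - r.val with hkdef
      have hk1 : 1 ≤ k := by have := r.isLt; omega
      have hkn : k ≤ n := by omega
      have hrk : r.val = n - k := by have := r.isLt; omega
      have claim : ∀ i : ℕ, ∀ _h1 : 1 ≤ i, i ≤ k →
          b r ⟨n - i, by omega⟩ = b' r ⟨n - i, by omega⟩ := by
        intro i
        induction i using Nat.strong_induction_on with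
        | _ i IH =>
          intro h1 h2
          obtain ⟨m, rfl⟩ : ∃ m, i = m + 1 := ⟨i - 1, by omega⟩
          have E := heq (m+1) k h1 h2 hkn
          rw [cornerMinor_expand n k m h2 hkn b, cornerMinor_expand n k m h2 hkn b',
            Fin.sum_univ_succ, Fin.sum_univ_succ] at E
          -- cofactor matrices agree (they use only rows strictly below r)
          have hsub : ∀ j : Fin (m+1),
              (Matrix.of fun p q : Fin m =>
                b ⟨n - k + 1 + p.val, by have := p.isLt; omega⟩
                  ⟨n - (m+1) + (j.succAbove q).val, by have := (j.succAbove q).isLt; omega⟩) =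
              (Matrix.of fun p q : Fin m =>
                b' ⟨n - k + 1 + p.val, by have := p.isLt; omega⟩
                  ⟨n - (m+1) + (j.succAbove q).val, by have := (j.succAbove q).isLt; omega⟩) := by
            intro j
            ext p q
            simp only [Matrix.of_apply]
            exact Hrow _ _ (show (r : ℕ) < n - k + 1 + p.val by omega)
          -- tail entries agree by the inner induction hypothesis
          have hent : ∀ j : Fin m,
              b ⟨n - k, by omega⟩ ⟨n - (m+1) + (j.succ : Fin (m+1)).val, by
                  have := j.isLt; omega⟩ =
              b' ⟨n - k, by omega⟩ ⟨n - (m+1) + (j.succ : Fin (m+1)).val, by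
                  have := j.isLt; omega⟩ := by
            intro j
            have hr0 : (⟨n - k, by omega⟩ : Fin n) = r := Fin.ext hrk.symm
            have hc0 : (⟨n - (m+1) + (j.succ : Fin (m+1)).val, by
                have := j.isLt; omega⟩ : Fin n) = ⟨n - (m - j.val), by omega⟩ :=
              Fin.ext (show n - (m+1) + (j.val + 1) = n - (m - j.val) by
                have := j.isLt; omega)
            rw [hr0, hc0]
            exact IH (m - j.val) (by have := j.isLt; omega) (by have := j.isLt; omega)
              (by have := j.isLt; omega)
          have htail : ∀ j : Fin m, j ∈ (univ : Finset (Fin m)) →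
              (-1 : ℂ) ^ ((j.succ : Fin (m+1)) : ℕ) *
                b ⟨n - k, by omega⟩ ⟨n - (m+1) + (j.succ : Fin (m+1)).val, by
                  have := j.isLt; omega⟩ *
                Matrix.det (Matrix.of fun p q : Fin m =>
                  b ⟨n - k + 1 + p.val, by have := p.isLt; omega⟩
                    ⟨n - (m+1) + ((j.succ : Fin (m+1)).succAbove q).val, by
                      have := ((j.succ : Fin (m+1)).succAbove q).isLt; omega⟩) =
              (-1 : ℂ) ^ ((j.succ : Fin (m+1)) : ℕ) *
                b' ⟨n - k, by omega⟩ ⟨n - (m+1) + (j.succ : Fin (m+1)).val, by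
                  have := j.isLt; omega⟩ *
                Matrix.det (Matrix.of fun p q : Fin m =>
                  b' ⟨n - k + 1 + p.val, by have := p.isLt; omega⟩
                    ⟨n - (m+1) + ((j.succ : Fin (m+1)).succAbove q).val, by
                      have := ((j.succ : Fin (m+1)).succAbove q).isLt; omega⟩) := by
            intro j _
            rw [hsub j.succ, hent j]
          rw [Finset.sum_congr rfl htail] at E
          simp only [Fin.val_zero, pow_zero, one_mul] at E
          have E2 := add_right_cancel E
          rw [hsub 0] at E2
          have hD : Matrix.det (Matrix.of fun p q : Fin m =>
              b' ⟨n - k + 1 + p.val, by have := p.isLt; omega⟩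
                ⟨n - (m+1) + ((0 : Fin (m+1)).succAbove q).val, by
                  have := ((0 : Fin (m+1)).succAbove q).isLt; omega⟩) ≠ 0 := by
            rcases Nat.eq_zero_or_pos m with hm | hm
            · subst hm
              rw [Matrix.det_fin_zero]
              exact one_ne_zero
            · have hDc : Matrix.det (Matrix.of fun p q : Fin m =>
                  b' ⟨n - k + 1 + p.val, by have := p.isLt; omega⟩
                    ⟨n - (m+1) + ((0 : Fin (m+1)).succAbove q).val, by
                      have := ((0 : Fin (m+1)).succAbove q).isLt; omega⟩)
                  = cornerMinor n (k-1) m b' := by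
                rw [cornerMinor_eq_det n (k-1) m hm (by omega) (by omega) b']
                congr 1
                ext p q
                simp only [Matrix.of_apply, Fin.succAbove_zero, Fin.val_succ]
                congr 1 <;> apply Fin.ext <;> simp <;> omega
              rw [hDc]
              rcases lt_or_eq_of_le (show m ≤ k - 1 by omega) with h | h
              · exact hnz' m (k-1) hm h (by omega)
              · rw [h]
                exact cornerMinor_diag_ne n (k-1) (by omega) (by omega) hb'
          have hfin := mul_right_cancel₀ hD E2
          have hr0 : r = (⟨n - k, by omega⟩ : Fin n) := Fin.ext hrk
          rw [← hr0] at hfin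
          exact hfin
      rcases lt_or_ge c.val r.val with h | h
      · rw [hb.1 r c h, hb'.1 r c h]
      · have hi1 : 1 ≤ n - c.val := by have := c.isLt; omega
        have hik : n - c.val ≤ k := by omega
        have hc : c = ⟨n - (n - c.val), by omega⟩ :=
          Fin.ext (show (c : ℕ) = n - (n - c.val) by have := c.isLt; omega)
        rw [hc]
        exact claim (n - c.val) hi1 hik
  ext r c
  exact key n r (by omega) c


end
end

section
/- Fix n ≥ 2. For every pair of subsets I, J ⊆ {1,…,n} with |I| = |J|, there exists a Laurent polynomial P_{I,J} with integer coefficients in variables indexed by the pairs (i,k) with 1 ≤ i ≤ k ≤ n, such that for every n×n upper triangular complex matrix b with positive diagonal entries satisfying Δ_i^{(k)}(b) ≠ 0 for all 1 ≤ i < k ≤ n, one has det(b_{I,J}) = P_{I,J}((Δ_i^{(k)}(b))_{1≤i≤k≤n}). -/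
open Matrix Finset Filter

noncomputable section

/-- index set for the corner-minor variables -/
def idxS (n : ℕ) : Finset (ℕ × ℕ) :=
  ((Finset.Icc 1 n) ×ˢ (Finset.Icc 1 n)).filter (fun p => p.1 ≤ p.2)

/-- `f` is representable as a Laurent polynomial in the corner minors on `AN n`. -/
def LRep (n : ℕ) (f : Matrix (Fin n) (Fin n) ℂ → ℂ) : Prop :=
  ∃ (P : MvPolynomial (ℕ × ℕ) ℤ) (d : ℕ × ℕ → ℕ),
    ∀ b ∈ AN n,
      f b * ∏ p ∈ idxS n, (cornerMinor n p.2 p.1 b) ^ (d p)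
        = MvPolynomial.aeval (fun p : ℕ × ℕ => cornerMinor n p.2 p.1 b) P

lemma aeval_monD (n : ℕ) (d : ℕ × ℕ → ℕ) (b : Matrix (Fin n) (Fin n) ℂ) :
    MvPolynomial.aeval (fun p : ℕ × ℕ => cornerMinor n p.2 p.1 b)
        (∏ p ∈ idxS n, (MvPolynomial.X p : MvPolynomial (ℕ × ℕ) ℤ) ^ d p)
      = ∏ p ∈ idxS n, (cornerMinor n p.2 p.1 b) ^ d p := by
  simp [map_prod]

lemma LRep.congr {n : ℕ} {f g : Matrix (Fin n) (Fin n) ℂ → ℂ}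
    (hf : LRep n f) (h : ∀ b ∈ AN n, f b = g b) : LRep n g := by
  obtain ⟨P, d, hP⟩ := hf
  exact ⟨P, d, fun b hb => by rw [← h b hb]; exact hP b hb⟩

lemma LRep.one {n : ℕ} : LRep n (fun _ => 1) :=
  ⟨1, 0, fun b _ => by simp⟩

lemma LRep.zero {n : ℕ} : LRep n (fun _ => 0) :=
  ⟨0, 0, fun b _ => by simp⟩

lemma LRep.mul {n : ℕ} {f g : Matrix (Fin n) (Fin n) ℂ → ℂ}
    (hf : LRep n f) (hg : LRep n g) : LRep n (fun b => f b * g b) := by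
  obtain ⟨P₁, d₁, h₁⟩ := hf
  obtain ⟨P₂, d₂, h₂⟩ := hg
  refine ⟨P₁ * P₂, d₁ + d₂, fun b hb => ?_⟩
  have : ∀ p : ℕ × ℕ, (cornerMinor n p.2 p.1 b) ^ (d₁ + d₂) p
      = (cornerMinor n p.2 p.1 b) ^ d₁ p * (cornerMinor n p.2 p.1 b) ^ d₂ p := by
    intro p; rw [Pi.add_apply, pow_add]
  rw [Finset.prod_congr rfl (fun p _ => this p), Finset.prod_mul_distrib, _root_.map_mul,
    ← h₁ b hb, ← h₂ b hb]
  ring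

lemma LRep.add {n : ℕ} {f g : Matrix (Fin n) (Fin n) ℂ → ℂ}
    (hf : LRep n f) (hg : LRep n g) : LRep n (fun b => f b + g b) := by
  obtain ⟨P₁, d₁, h₁⟩ := hf
  obtain ⟨P₂, d₂, h₂⟩ := hg
  refine ⟨P₁ * ∏ p ∈ idxS n, MvPolynomial.X p ^ d₂ p
      + P₂ * ∏ p ∈ idxS n, MvPolynomial.X p ^ d₁ p, d₁ + d₂, fun b hb => ?_⟩
  have : ∀ p : ℕ × ℕ, (cornerMinor n p.2 p.1 b) ^ (d₁ + d₂) p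
      = (cornerMinor n p.2 p.1 b) ^ d₁ p * (cornerMinor n p.2 p.1 b) ^ d₂ p := by
    intro p; rw [Pi.add_apply, pow_add]
  rw [Finset.prod_congr rfl (fun p _ => this p), Finset.prod_mul_distrib, map_add, _root_.map_mul,
    _root_.map_mul, aeval_monD, aeval_monD, ← h₁ b hb, ← h₂ b hb]
  ring

lemma LRep.intMul {n : ℕ} (z : ℤ) {f : Matrix (Fin n) (Fin n) ℂ → ℂ}
    (hf : LRep n f) : LRep n (fun b => (z : ℂ) * f b) := by
  obtain ⟨P, d, hP⟩ := hf
  refine ⟨(z : MvPolynomial (ℕ × ℕ) ℤ) * P, d, fun b hb => ?_⟩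
  rw [_root_.map_mul, map_intCast, ← hP b hb]; ring

lemma LRep.corner {n : ℕ} (k i : ℕ) : LRep n (fun b => cornerMinor n k i b) :=
  ⟨MvPolynomial.X (i, k), 0, fun b _ => by simp⟩

lemma LRep.div {n : ℕ} {f g : Matrix (Fin n) (Fin n) ℂ → ℂ} {i k : ℕ}
    (hmem : (i, k) ∈ idxS n) (hg : LRep n g)
    (h : ∀ b ∈ AN n, f b * cornerMinor n k i b = g b) : LRep n f := by
  classical
  obtain ⟨P, d, hP⟩ := hg
  refine ⟨P, fun p => d p + (if p = (i, k) then 1 else 0), fun b hb => ?_⟩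
  have hsplit : ∏ p ∈ idxS n,
        (cornerMinor n p.2 p.1 b) ^ (d p + if p = (i,k) then 1 else 0)
      = (∏ p ∈ idxS n, (cornerMinor n p.2 p.1 b) ^ d p)
        * ∏ p ∈ idxS n, (cornerMinor n p.2 p.1 b) ^ (if p = (i,k) then 1 else 0) := by
    rw [← Finset.prod_mul_distrib]
    exact Finset.prod_congr rfl fun p _ => pow_add _ _ _
  have hone : (∏ p ∈ idxS n, (cornerMinor n p.2 p.1 b) ^ (if p = (i,k) then 1 else 0))
      = cornerMinor n k i b := by
    rw [Finset.prod_eq_single (i, k)]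
    · simp
    · intro p _ hp; simp [hp]
    · intro hc; exact absurd hmem hc
  rw [hsplit, hone, ← hP b hb]
  rw [← h b hb]; ring

lemma LRep.sum {n : ℕ} {ι : Type*} (s : Finset ι) (f : ι → Matrix (Fin n) (Fin n) ℂ → ℂ)
    (h : ∀ i ∈ s, LRep n (f i)) : LRep n (fun b => ∑ i ∈ s, f i b) := by
  classical
  induction s using Finset.cons_induction with
  | empty => simpa using LRep.zero
  | cons a s ha ih =>
      have := (h a (Finset.mem_cons_self a s)).add (ih fun i hi => h i (Finset.mem_cons.2 (Or.inr hi)))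
      exact this.congr fun b _ => by rw [Finset.sum_cons]

lemma LRep.prod {n : ℕ} {ι : Type*} (s : Finset ι) (f : ι → Matrix (Fin n) (Fin n) ℂ → ℂ)
    (h : ∀ i ∈ s, LRep n (f i)) : LRep n (fun b => ∏ i ∈ s, f i b) := by
  classical
  induction s using Finset.cons_induction with
  | empty => simpa using LRep.one
  | cons a s ha ih =>
      have := (h a (Finset.mem_cons_self a s)).mul (ih fun i hi => h i (Finset.mem_cons.2 (Or.inr hi)))
      exact this.congr fun b _ => by rw [Finset.prod_cons]

lemma LRep.det {n m : ℕ} (f : Fin m → Fin m → Matrix (Fin n) (Fin n) ℂ → ℂ)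
    (h : ∀ a c, LRep n (f a c)) :
    LRep n (fun b => Matrix.det (Matrix.of fun a c : Fin m => f a c b)) := by
  have : LRep n (fun b => ∑ σ : Equiv.Perm (Fin m),
      ((Equiv.Perm.sign σ : ℤ) : ℂ) * ∏ i : Fin m, f (σ i) i b) := by
    refine LRep.sum _ _ fun σ _ => ?_
    exact LRep.intMul _ (LRep.prod _ _ fun i _ => h (σ i) i)
  exact this.congr fun b _ => by rw [Matrix.det_apply']; rfl


/-- totalized entry function -/
def ent (n : ℕ) (b : Matrix (Fin n) (Fin n) ℂ) (i j : ℕ) : ℂ :=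
  if h : i < n ∧ j < n then b ⟨i, h.1⟩ ⟨j, h.2⟩ else 0

/-- window matrix: rows `p, …, p+m-1`, cols `q, …, q+m-1` -/
def win (n : ℕ) (b : Matrix (Fin n) (Fin n) ℂ) (p q m : ℕ) : Matrix (Fin m) (Fin m) ℂ :=
  Matrix.of fun a c => ent n b (p + a) (q + c)

lemma cornerMinor_win {n : ℕ} (p q : ℕ) (hpq : p ≤ q) (hq : q < n)
    (b : Matrix (Fin n) (Fin n) ℂ) :
    cornerMinor n (n - p) (n - q) b = (win n b p q (n - q)).det := by
  have h : 1 ≤ n - q ∧ n - q ≤ n - p ∧ n - p ≤ n := by omega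
  rw [cornerMinor, dif_pos h]
  congr 1
  funext a c
  have ha := a.isLt
  have hc := c.isLt
  have h1 : p + (a : ℕ) < n := by omega
  have h2 : q + (c : ℕ) < n := by omega
  show b _ _ = ent n b (p + a) (q + c)
  rw [ent, dif_pos ⟨h1, h2⟩]
  congr 1 <;> · apply Fin.ext; simp; omega

lemma det_cast_size {k l : ℕ} (h : k = l) (f : ℕ → ℕ → ℂ) :
    Matrix.det (Matrix.of fun a c : Fin k => f a c) =
    Matrix.det (Matrix.of fun a c : Fin l => f a c) := by subst h; rfl

/-- cofactor expansion of a window determinant along its first column -/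
lemma win_expand {n : ℕ} (b : Matrix (Fin n) (Fin n) ℂ) (p q m : ℕ) :
    (win n b p q (m + 1)).det
      = ∑ s : Fin (m + 1), (-1) ^ (s : ℕ) * ent n b (p + s) q *
          Matrix.det (Matrix.of fun a c : Fin m =>
            ent n b (p + (s.succAbove a : ℕ)) (q + 1 + c)) := by
  rw [Matrix.det_succ_column_zero]
  refine Finset.sum_congr rfl fun s _ => ?_
  have h0 : (win n b p q (m+1)) s 0 = ent n b (p + s) q := by
    show ent n b (p + s) (q + ((0 : Fin (m+1)) : ℕ)) = _
    norm_num
  have h1 : (win n b p q (m+1)).submatrix s.succAbove Fin.succ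
      = Matrix.of fun a c : Fin m => ent n b (p + (s.succAbove a : ℕ)) (q + 1 + c) := by
    funext a c
    show ent n b (p + (s.succAbove a : ℕ)) (q + ((c.succ : Fin (m+1)) : ℕ)) = _
    rw [Fin.val_succ]
    congr 1
    omega
  rw [h0, h1]

lemma lrep_ent_lower {n : ℕ} (p q : ℕ) (h : q < p) :
    LRep n (fun b => ent n b p q) := by
  refine LRep.zero.congr fun b hb => ?_
  by_cases hc : p < n ∧ q < n
  · rw [ent, dif_pos hc]
    exact (hb.1 ⟨p, hc.1⟩ ⟨q, hc.2⟩ h).symm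
  · rw [ent, dif_neg hc]

lemma lrep_ent {n : ℕ} : ∀ (μ p q : ℕ), p < n → q < n →
    (n - q) * (n + 1) + (q - p) ≤ μ → LRep n (fun b => ent n b p q) := by
  intro μ
  induction μ with
  | zero =>
    intro p q hp hq hμ
    have h1 : 0 < (n - q) * (n + 1) := Nat.mul_pos (by omega) (by omega)
    omega
  | succ μ ih =>
    intro p q hp hq hμ
    rcases lt_or_ge q p with hqp | hpq
    · exact lrep_ent_lower p q hqp
    rcases eq_or_lt_of_le (Nat.succ_le_of_lt hq) with hqn | hqn
    -- base case: q = n - 1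
    · have hq1 : n - q = 1 := by omega
      have : LRep n (fun b => cornerMinor n (n - p) (n - q) b) := LRep.corner _ _
      refine this.congr fun b hb => ?_
      rw [cornerMinor_win p q hpq hq, hq1, Matrix.det_fin_one]
      show ent n b (p + ((0 : Fin 1) : ℕ)) (q + ((0 : Fin 1) : ℕ)) = ent n b p q
      norm_num
    -- main case: q < n - 1
    · have hm : ∃ m, n - q = m + 2 := ⟨n - q - 2, by omega⟩
      obtain ⟨m, hm⟩ := hm
      -- auxiliary arithmetic for measure decrease
      have emul : (n - q) * (n + 1) = (n - q - 1) * (n + 1) + (n + 1) := by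
        rw [hm, show m + 2 - 1 = m + 1 from rfl]; ring
      -- the cofactor determinants are representable
      have hcof : ∀ s : Fin (m + 2), LRep n (fun b =>
          Matrix.det (Matrix.of fun a c : Fin (m+1) =>
            ent n b (p + (s.succAbove a : ℕ)) (q + 1 + c))) := by
        intro s
        refine LRep.det _ fun a c => ?_
        set r := p + (s.succAbove a : ℕ) with hr
        set c' := q + 1 + (c : ℕ) with hc'
        rcases lt_or_ge c' r with hlt | hle
        · exact lrep_ent_lower r c' hlt
        · have hca : (c : ℕ) < m + 1 := c.isLt
          have hrn : r < n := by
            have := (s.succAbove a).isLt; omega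
          have hcn : c' < n := by omega
          refine ih r c' hrn hcn ?_
          have e3 : n - c' ≤ n - q - 1 := by omega
          have e4 : (n - c') * (n + 1) ≤ (n - q - 1) * (n + 1) :=
            Nat.mul_le_mul_right _ e3
          omega
      -- entries of the first column below the top are representable
      have hcol : ∀ s : Fin (m + 1), LRep n (fun b => ent n b (p + 1 + s) q) := by
        intro s
        rcases lt_or_ge q (p + 1 + s) with hlt | hle
        · exact lrep_ent_lower _ _ hlt
        · refine ih (p + 1 + s) q (by omega) hq (by omega)
      -- the sum of the non-leading terms
      have hrest : LRep n (fun b => ∑ s : Fin (m + 1),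
          (-1 : ℂ) ^ ((s : ℕ) + 1) * ent n b (p + 1 + s) q *
            Matrix.det (Matrix.of fun a c : Fin (m+1) =>
              ent n b (p + ((Fin.succ s).succAbove a : ℕ)) (q + 1 + c))) := by
        refine LRep.sum _ _ fun s _ => ?_
        have h1 : LRep n (fun b => ent n b (p + 1 + s) q *
            Matrix.det (Matrix.of fun a c : Fin (m+1) =>
              ent n b (p + ((Fin.succ s).succAbove a : ℕ)) (q + 1 + c))) :=
          (hcol s).mul (hcof s.succ)
        have h2 := LRep.intMul ((-1 : ℤ) ^ ((s : ℕ) + 1)) h1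
        refine h2.congr fun b hb => ?_
        push_cast
        ring
      -- key identity from the cofactor expansion
      have hkey : ∀ b : Matrix (Fin n) (Fin n) ℂ,
          ent n b p q * cornerMinor n (n - (p+1)) (n - (q+1)) b
          = cornerMinor n (n - p) (n - q) b
            - ∑ s : Fin (m + 1),
              (-1 : ℂ) ^ ((s : ℕ) + 1) * ent n b (p + 1 + s) q *
                Matrix.det (Matrix.of fun a c : Fin (m+1) =>
                  ent n b (p + ((Fin.succ s).succAbove a : ℕ)) (q + 1 + c)) := by
        intro b
        have e1 : cornerMinor n (n - p) (n - q) b = (win n b p q (m + 1 + 1)).det := by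
          rw [cornerMinor_win p q hpq hq]
          exact det_cast_size (f := fun a c => ent n b (p + a) (q + c)) (by omega)
        have e2 : cornerMinor n (n - (p+1)) (n - (q+1)) b
            = Matrix.det (Matrix.of fun a c : Fin (m+1) =>
                ent n b (p + (((0 : Fin (m+2)).succAbove a : Fin (m+2)) : ℕ)) (q + 1 + c)) := by
          rw [cornerMinor_win (p+1) (q+1) (by omega) (by omega)]
          have ew : (win n b (p+1) (q+1) (n-(q+1))).det
              = Matrix.det (Matrix.of fun a c : Fin (n-(q+1)) =>
                  ent n b (p + 1 + (a : ℕ)) (q + 1 + (c : ℕ))) := rfl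
          rw [ew, det_cast_size (f := fun a c => ent n b (p + 1 + a) (q + 1 + c))
            (show n - (q+1) = m + 1 by omega)]
          congr 1
          funext a c
          simp only [Matrix.of_apply]
          rw [Fin.zero_succAbove, Fin.val_succ]
          congr 1
          omega
        rw [e1, win_expand, Fin.sum_univ_succ, e2]
        have t0 : (-1 : ℂ) ^ (((0 : Fin (m+2))) : ℕ) * ent n b (p + ((0 : Fin (m+2)) : ℕ)) q
            = ent n b p q := by norm_num
        have tsum : ∀ s : Fin (m + 1),
            (-1 : ℂ) ^ ((s.succ : Fin (m+2)) : ℕ) * ent n b (p + ((s.succ : Fin (m+2)) : ℕ)) q *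
              Matrix.det (Matrix.of fun a c : Fin (m+1) =>
                ent n b (p + ((s.succ : Fin (m+2)).succAbove a : ℕ)) (q + 1 + c))
            = (-1 : ℂ) ^ ((s : ℕ) + 1) * ent n b (p + 1 + s) q *
              Matrix.det (Matrix.of fun a c : Fin (m+1) =>
                ent n b (p + ((Fin.succ s).succAbove a : ℕ)) (q + 1 + c)) := by
          intro s
          rw [Fin.val_succ]
          congr 2
          congr 1
          omega
        rw [Finset.sum_congr rfl (fun s _ => tsum s), t0]
        ring
      -- conclude by dividing by the corner minor
      have hrhs : LRep n (fun b => cornerMinor n (n - p) (n - q) b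
          - ∑ s : Fin (m + 1),
              (-1 : ℂ) ^ ((s : ℕ) + 1) * ent n b (p + 1 + s) q *
                Matrix.det (Matrix.of fun a c : Fin (m+1) =>
                  ent n b (p + ((Fin.succ s).succAbove a : ℕ)) (q + 1 + c))) := by
        have h3 := (LRep.corner (n := n) (n - p) (n - q)).add (LRep.intMul (-1) hrest)
        refine h3.congr fun b hb => ?_
        push_cast
        ring
      refine LRep.div (i := n - (q+1)) (k := n - (p+1)) ?_ hrhs fun b hb => hkey b
      simp only [idxS, Finset.mem_filter, Finset.mem_product, Finset.mem_Icc]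
      omega



lemma lrep_entry {n : ℕ} (i j : Fin n) : LRep n (fun b => b i j) := by
  have h := lrep_ent ((n - (j : ℕ)) * (n + 1) + ((j : ℕ) - (i : ℕ))) i j i.isLt j.isLt le_rfl
  refine h.congr fun b hb => ?_
  rw [ent, dif_pos ⟨i.isLt, j.isLt⟩]


/-- Every minor `det(b_{I,J})` is a Laurent polynomial with integer
coefficients in the corner minors `Δ_i^{(k)}(b)` (variables indexed by pairs `(i,k)`),
valid on the locus where all corner minors are nonzero: there exist a polynomial `P`
and a monomial denominator exponent `d` with
`det(b_{I,J})·∏ (Δ_i^{(k)}(b))^{d(i,k)} = P((Δ_i^{(k)}(b)))`. -/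
theorem statement_13 (n : ℕ) (hn : 2 ≤ n) (I J : Finset (Fin n)) (hIJ : I.card = J.card) :
    ∃ (P : MvPolynomial (ℕ × ℕ) ℤ) (d : ℕ × ℕ → ℕ),
      ∀ b : Matrix (Fin n) (Fin n) ℂ, b ∈ AN n →
        (∀ i k : ℕ, 1 ≤ i → i < k → k ≤ n → cornerMinor n k i b ≠ 0) →
        subMinor b I J *
            ∏ p ∈ ((Finset.Icc 1 n) ×ˢ (Finset.Icc 1 n)).filter (fun p => p.1 ≤ p.2),
              (cornerMinor n p.2 p.1 b) ^ (d p) =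
          MvPolynomial.aeval (fun p : ℕ × ℕ => cornerMinor n p.2 p.1 b) P := by
  have hRep : LRep n (fun b => subMinor b I J) := by
    have hdet := LRep.det (n := n) (m := I.card)
      (fun p q b => b ((I.orderIsoOfFin rfl) p) ((J.orderIsoOfFin hIJ.symm) q))
      (fun p q => lrep_entry _ _)
    refine hdet.congr fun b hb => ?_
    rw [subMinor, dif_pos hIJ]
  obtain ⟨P, d, h⟩ := hRep
  exact ⟨P, d, fun b hb _ => h b hb⟩


end
end
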